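/- arXiv:2004.07151 — 8 statements merged into one kernel-verified Lean document; each statement's English description precedes it below -/
import Mathlib

section
/- If F is a connected graph with no path on k-1 vertices, and P is the vertex set of a longest path in F, then the induced subgraph F[V(F) \ P] contains no path on k-2 vertices. -/
open SimpleGraph

private lemma exists_path_of_le' {V : Type*} {F : SimpleGraph V} :
    ∀ {x y : V} (w : F.Walk x y), w.IsPath → ∀ m, m ≤ w.length →
      ∃ u v : V, ∃ q : F.Walk u v, q.IsPath ∧ q.length = m := by
  intro x y w
  induction w with
  | nil =>
    intro _ m hm
    refine ⟨x, x, .nil, by simp, ?_⟩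
    simpa using (Nat.le_zero.mp (by simpa using hm)).symm
  | @cons a c d e w ih =>
    intro h m hm
    rcases Nat.lt_or_ge m (w.length + 1) with h1 | h2
    · exact ih h.of_cons m (by omega)
    · refine ⟨a, d, .cons e w, h, ?_⟩
      have : m = w.length + 1 := by
        simp only [SimpleGraph.Walk.length_cons] at hm; omega
      simp [this]

private lemma isPath_append' {V : Type*} {F : SimpleGraph V} {u v w : V}
    {p : F.Walk u v} {q : F.Walk v w}
    (hp : p.IsPath) (hq : q.IsPath) (h : ∀ x, x ∈ p.support → x ∈ q.support → x = v) :
    (p.append q).IsPath := by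
  rw [SimpleGraph.Walk.isPath_def, SimpleGraph.Walk.support_append]
  refine List.Nodup.append hp.support_nodup ?_ ?_
  · have := hq.support_nodup
    rw [q.support_eq_cons] at this
    exact this.of_cons
  · intro x hx hx'
    have hxq : x ∈ q.support := by
      rw [q.support_eq_cons]; exact List.mem_cons_of_mem _ hx'
    have hxv : x = v := h x hx hxq
    have := hq.support_nodup
    rw [q.support_eq_cons] at this
    exact List.Nodup.notMem this (hxv ▸ hx')

/-- If `F` is a connected graph with no path on `k-1` vertices (i.e. no path walk of length
`k-2`), and `p` is a longest path in `F`, then the subgraph induced on the vertices outside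
`p` contains no path on `k-2` vertices (i.e. no path walk of length `k-3`). -/
theorem stmt1 {V : Type*} [Fintype V] (k : ℕ) (hk : 3 ≤ k)
    (F : SimpleGraph V) (hconn : F.Connected)
    (hfree : ¬ ∃ (x y : V) (r : F.Walk x y), r.IsPath ∧ r.length = k - 2)
    {a b : V} (p : F.Walk a b) (hp : p.IsPath)
    (hmax : ∀ (x y : V) (r : F.Walk x y), r.IsPath → r.length ≤ p.length) :
    ¬ ∃ (x y : {v : V | v ∉ p.support})
        (r : (F.induce {v : V | v ∉ p.support}).Walk x y), r.IsPath ∧ r.length = k - 3 := by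
  classical
  rintro ⟨x, y, r, hr, hrlen⟩
  -- Step 1: p.length ≤ k - 3
  have hplen : p.length ≤ k - 3 := by
    by_contra hlt
    push_neg at hlt
    have hk2 : k - 2 ≤ p.length := by omega
    obtain ⟨u, v, q, hq, hq2⟩ := exists_path_of_le' p hp (k - 2) hk2
    exact hfree ⟨u, v, q, hq, hq2⟩
  -- Map r into F
  let e := SimpleGraph.Embedding.induce (G := F) {v : V | v ∉ p.support}
  have einj : Function.Injective e.toHom := e.injective
  let r' : F.Walk (x : V) (y : V) := r.map e.toHom
  have hr' : r'.IsPath := SimpleGraph.Walk.map_isPath_of_injective einj hr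
  have hr'len : r'.length = k - 3 := by
    exact (SimpleGraph.Walk.length_map _ _).trans hrlen
  have hr'supp : ∀ w ∈ r'.support, w ∉ p.support := by
    intro w hw
    have hsm : r'.support = r.support.map e.toHom := SimpleGraph.Walk.support_map _ _
    rw [hsm] at hw
    obtain ⟨⟨z, hz⟩, -, hzw⟩ := List.mem_map.mp hw
    rw [← hzw]; exact hz
  -- p.length = k - 3
  have hpeq : p.length = k - 3 :=
    le_antisymm hplen (hr'len ▸ hmax _ _ r' hr')
  -- minimal connecting path
  have hex : ∃ n : ℕ, ∃ u v : V, ∃ q : F.Walk u v,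
      u ∈ r'.support ∧ v ∈ p.support ∧ q.IsPath ∧ q.length = n := by
    obtain ⟨w⟩ := hconn (x : V) a
    exact ⟨w.toPath.1.length, x, a, w.toPath.1, r'.start_mem_support,
      p.start_mem_support, w.toPath.2, rfl⟩
  let n := Nat.find hex
  obtain ⟨u, v, q, huR, hvP, hq, hqlen⟩ := Nat.find_spec hex
  have hmin : ∀ m < n, ¬ ∃ u v : V, ∃ q : F.Walk u v,
      u ∈ r'.support ∧ v ∈ p.support ∧ q.IsPath ∧ q.length = m := fun m hm =>
    Nat.find_min hex hm
  have huP : u ∉ p.support := hr'supp u huR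
  have hqpos : 1 ≤ q.length := by
    rcases Nat.eq_zero_or_pos q.length with h0 | h1
    · exact absurd (SimpleGraph.Walk.eq_of_length_eq_zero h0 ▸ hvP) huP
    · exact h1
  -- internal disjointness
  have hqR : ∀ w ∈ q.support, w ∈ r'.support → w = u := by
    intro w hw hwR
    by_contra hne
    have hsplit := congrArg SimpleGraph.Walk.length (q.take_spec hw)
    rw [SimpleGraph.Walk.length_append] at hsplit
    have htk : 1 ≤ (q.takeUntil w hw).length := by
      rcases Nat.eq_zero_or_pos (q.takeUntil w hw).length with h0 | h1
      · exact absurd (SimpleGraph.Walk.eq_of_length_eq_zero h0).symm hne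
      · exact h1
    refine hmin (q.dropUntil w hw).length (by omega) ⟨w, v, q.dropUntil w hw,
      hwR, hvP, hq.dropUntil hw, rfl⟩
  have hqP : ∀ w ∈ q.support, w ∈ p.support → w = v := by
    intro w hw hwP
    by_contra hne
    have hsplit := congrArg SimpleGraph.Walk.length (q.take_spec hw)
    rw [SimpleGraph.Walk.length_append] at hsplit
    have htk : 1 ≤ (q.dropUntil w hw).length := by
      rcases Nat.eq_zero_or_pos (q.dropUntil w hw).length with h0 | h1
      · exact absurd (SimpleGraph.Walk.eq_of_length_eq_zero h0) hne
      · exact h1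
    refine hmin (q.takeUntil w hw).length (by omega) ⟨u, w, q.takeUntil w hw,
      huR, hwP, hq.takeUntil hw, rfl⟩
  -- split r' at u, choose longer side (as a walk ending at u)
  have hsplitR := congrArg SimpleGraph.Walk.length (r'.take_spec huR)
  rw [SimpleGraph.Walk.length_append] at hsplitR
  obtain ⟨z, Rw, hRw, hRwsupp, hRwlen⟩ :
      ∃ z : V, ∃ Rw : F.Walk z u, Rw.IsPath ∧ (∀ w ∈ Rw.support, w ∈ r'.support) ∧
        k - 3 ≤ 2 * Rw.length := by
    rcases le_total (r'.takeUntil u huR).length (r'.dropUntil u huR).length with hle | hle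
    · refine ⟨y, (r'.dropUntil u huR).reverse, (hr'.dropUntil huR).reverse, ?_, ?_⟩
      · intro w hw
        rw [SimpleGraph.Walk.support_reverse, List.mem_reverse] at hw
        exact r'.support_dropUntil_subset huR hw
      · rw [SimpleGraph.Walk.length_reverse]; omega
    · refine ⟨x, r'.takeUntil u huR, hr'.takeUntil huR, ?_, ?_⟩
      · intro w hw; exact r'.support_takeUntil_subset huR hw
      · omega
  -- split p at v, choose longer side (as a walk starting at v)
  have hsplitP := congrArg SimpleGraph.Walk.length (p.take_spec hvP)
  rw [SimpleGraph.Walk.length_append] at hsplitP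
  obtain ⟨z', Pw, hPw, hPwsupp, hPwlen⟩ :
      ∃ z' : V, ∃ Pw : F.Walk v z', Pw.IsPath ∧ (∀ w ∈ Pw.support, w ∈ p.support) ∧
        p.length ≤ 2 * Pw.length := by
    rcases le_total (p.takeUntil v hvP).length (p.dropUntil v hvP).length with hle | hle
    · refine ⟨b, p.dropUntil v hvP, hp.dropUntil hvP, ?_, ?_⟩
      · intro w hw; exact p.support_dropUntil_subset hvP hw
      · omega
    · refine ⟨a, (p.takeUntil v hvP).reverse, (hp.takeUntil hvP).reverse, ?_, ?_⟩
      · intro w hw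
        rw [SimpleGraph.Walk.support_reverse, List.mem_reverse] at hw
        exact p.support_takeUntil_subset hvP hw
      · rw [SimpleGraph.Walk.length_reverse]; omega
  -- assemble
  have hqPw : (q.append Pw).IsPath := by
    refine isPath_append' hq hPw ?_
    intro w hw hw'
    exact hqP w hw (hPwsupp w hw')
  have hW : (Rw.append (q.append Pw)).IsPath := by
    refine isPath_append' hRw hqPw ?_
    intro w hw hw'
    rw [SimpleGraph.Walk.support_append, List.mem_append] at hw'
    rcases hw' with hw' | hw'
    · exact hqR w hw' (hRwsupp w hw)
    · exact absurd (hPwsupp w (List.mem_of_mem_tail hw'))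
        (hr'supp w (hRwsupp w hw))
  have hWlen := hmax _ _ _ hW
  rw [SimpleGraph.Walk.length_append, SimpleGraph.Walk.length_append] at hWlen
  omega
end

section
/- Let G be a graph and u a vertex such that u is contained in at most t copies of the fan F_k (the graph formed from a path on k-1 vertices by adding a vertex adjacent to all path vertices). Then every subgraph F of the induced neighbourhood graph G[N(u)] has average degree at most k - 3 + √(2t). -/
set_option linter.unusedSectionVars false
open scoped Classical

namespace EGaux

open SimpleGraph Finset

variable {W : Type*} [Fintype W]

/-- number of edges of `H` with both endpoints in `S` -/
noncomputable def eIn (H : SimpleGraph W) (S : Finset W) : ℕ :=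
  (H.edgeFinset.filter (fun e => ∀ x ∈ e, x ∈ S)).card

/-- in-`S` degree -/
noncomputable def dIn (H : SimpleGraph W) (S : Finset W) (v : W) : ℕ :=
  (S.filter (fun w => H.Adj v w)).card

lemma dIn_le (H : SimpleGraph W) (S : Finset W) {v : W} (hv : v ∈ S) :
    dIn H S v ≤ S.card - 1 := by
  have h1 : S.filter (fun w => H.Adj v w) ⊆ S.erase v := by
      intro w hw
      simp only [mem_filter] at hw
      exact Finset.mem_erase.2 ⟨fun h => H.irrefl (h ▸ hw.2), hw.1⟩
  calc dIn H S v ≤ (S.erase v).card := Finset.card_le_card h1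
    _ = S.card - 1 := Finset.card_erase_of_mem hv

lemma eIn_erase (H : SimpleGraph W) (S : Finset W) (v : W) :
    eIn H S ≤ eIn H (S.erase v) + dIn H S v := by
  classical
  have hsub : H.edgeFinset.filter (fun e => ∀ x ∈ e, x ∈ S) ⊆
      (H.edgeFinset.filter (fun e => ∀ x ∈ e, x ∈ S.erase v)) ∪
      (H.edgeFinset.filter (fun e => (∀ x ∈ e, x ∈ S) ∧ v ∈ e)) := by
    intro e he
    simp only [mem_filter, mem_union] at he ⊢
    by_cases hv : v ∈ e
    · exact Or.inr ⟨he.1, he.2, hv⟩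
    · exact Or.inl ⟨he.1, fun x hx => Finset.mem_erase.2 ⟨fun h => hv (h ▸ hx), he.2 x hx⟩⟩
  have hcard : (H.edgeFinset.filter (fun e => (∀ x ∈ e, x ∈ S) ∧ v ∈ e)).card ≤ dIn H S v := by
    apply Finset.card_le_card_of_injOn
      (fun e => if h : v ∈ e then Sym2.Mem.other' h else v)
    · intro e he
      simp only [Finset.mem_coe, mem_filter] at he
      obtain ⟨he1, he2, hv⟩ := he
      simp only [hv, dif_pos]
      have hmem := Sym2.other_mem' hv
      have hadj : H.Adj v (Sym2.Mem.other' hv) := by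
        have := Sym2.other_spec' hv
        rw [← SimpleGraph.mem_edgeSet, this]
        exact SimpleGraph.mem_edgeFinset.mp he1
      exact mem_filter.2 ⟨he2 _ hmem, hadj⟩
    · intro e1 h1 e2 h2 heq
      simp only [Finset.coe_filter, Set.mem_setOf_eq] at h1 h2
      have hv1 : v ∈ e1 := h1.2.2
      have hv2 : v ∈ e2 := h2.2.2
      simp only [hv1, hv2, dif_pos] at heq
      rw [← Sym2.other_spec' hv1, ← Sym2.other_spec' hv2, heq]
  calc eIn H S ≤ _ := Finset.card_le_card hsub
    _ ≤ _ + _ := Finset.card_union_le _ _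
    _ ≤ eIn H (S.erase v) + dIn H S v := by exact Nat.add_le_add le_rfl hcard

lemma eIn_le (H : SimpleGraph W) (S : Finset W) : 2 * eIn H S ≤ S.card * (S.card - 1) := by
  classical
  induction S using Finset.strongInduction with
  | _ S ih =>
    rcases S.eq_empty_or_nonempty with rfl | ⟨v, hv⟩
    · have : eIn H ∅ = 0 := by
        apply Finset.card_eq_zero.2
        apply Finset.filter_eq_empty_iff.2
        intro e he
        intro h
        induction e with
        | _ a b =>
          have := h a (Sym2.mem_mk_left a b)
          simp at this
      simp [this]
    · have h1 := eIn_erase H S v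
      have h2 := ih (S.erase v) (Finset.erase_ssubset hv)
      have h3 := dIn_le H S hv
      have hc : 1 ≤ S.card := Finset.card_pos.2 ⟨v, hv⟩
      have hce : (S.erase v).card = S.card - 1 := Finset.card_erase_of_mem hv
      rw [hce] at h2
      calc 2 * eIn H S ≤ 2 * eIn H (S.erase v) + 2 * dIn H S v := by omega
        _ ≤ (S.card - 1) * (S.card - 1 - 1) + 2 * (S.card - 1) := by omega
        _ ≤ S.card * (S.card - 1) := by
            obtain ⟨d, hd⟩ : ∃ d, S.card = d + 1 := ⟨S.card - 1, by omega⟩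
            rw [hd]
            simp only [Nat.add_sub_cancel]
            cases d with
            | zero => simp
            | succ e => simp only [Nat.add_sub_cancel]; nlinarith

lemma eIn_split (H : SimpleGraph W) (S T : Finset W) (hTS : T ⊆ S)
    (hclosed : ∀ a ∈ T, ∀ b ∈ S, H.Adj a b → b ∈ T) :
    eIn H S = eIn H T + eIn H (S \ T) := by
  classical
  unfold eIn
  rw [← Finset.card_union_of_disjoint, Finset.filter_union_right]
  · congr 1
    apply Finset.filter_congr
    intro e he
    rw [SimpleGraph.mem_edgeFinset] at he
    constructor
    · intro h
      induction e with
      | _ a b =>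
        have ha : a ∈ S := h a (Sym2.mem_mk_left a b)
        have hb : b ∈ S := h b (Sym2.mem_mk_right a b)
        have hadj : H.Adj a b := he
        by_cases haT : a ∈ T
        · left
          intro x hx
          rcases Sym2.mem_iff.mp hx with rfl | rfl
          · exact haT
          · exact hclosed _ haT _ hb hadj
        · right
          intro x hx
          rcases Sym2.mem_iff.mp hx with rfl | rfl
          · exact Finset.mem_sdiff.2 ⟨ha, haT⟩
          · exact Finset.mem_sdiff.2 ⟨hb, fun hbT => haT (hclosed _ hbT _ ha hadj.symm)⟩
    · intro h x hx
      rcases h with h | h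
      · exact hTS (h x hx)
      · exact Finset.mem_sdiff.mp (h x hx) |>.1
  · rw [Finset.disjoint_left]
    intro e h1 h2
    simp only [mem_filter] at h1 h2
    induction e with
    | _ a b =>
      have hT : a ∈ T := h1.2 a (Sym2.mem_mk_left a b)
      have hST : a ∈ S \ T := h2.2 a (Sym2.mem_mk_left a b)
      simp_all

section Walks

open SimpleGraph Walk

variable {H : SimpleGraph W}

lemma getVert_mem_support' {a b : W} (p : H.Walk a b) (i : ℕ) :
    p.getVert i ∈ p.support := by
  by_cases hi : i ≤ p.length
  · exact Walk.mem_support_iff_exists_getVert.2 ⟨i, rfl, hi⟩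
  · rw [Walk.getVert_of_length_le p (by omega)]
    exact Walk.end_mem_support p

lemma getVert_injOn_of_isPath {a b : W} {p : H.Walk a b} (hp : p.IsPath) :
    ∀ i ≤ p.length, ∀ j ≤ p.length, p.getVert i = p.getVert j → i = j := by
  induction p with
  | nil => intro i hi j hj _; simp at hi hj; omega
  | cons h q ih =>
    rw [Walk.cons_isPath_iff] at hp
    intro i hi j hj heq
    match i, j with
    | 0, 0 => rfl
    | 0, j+1 =>
      exfalso
      rw [Walk.getVert_zero, Walk.getVert_cons_succ] at heq
      exact hp.2 (heq ▸ getVert_mem_support' q j)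
    | i+1, 0 =>
      exfalso
      rw [Walk.getVert_zero, Walk.getVert_cons_succ] at heq
      exact hp.2 (heq ▸ getVert_mem_support' q i)
    | i+1, j+1 =>
      simp only [Walk.getVert_cons_succ] at heq
      simp only [Walk.length_cons] at hi hj
      have := ih hp.1 i (by omega) j (by omega) heq
      omega

noncomputable def walkOfFn (H : SimpleGraph W) (f : ℕ → W) :
    (n : ℕ) → (∀ i < n, H.Adj (f i) (f (i+1))) → H.Walk (f 0) (f n)
  | 0, _ => Walk.nil
  | n+1, h => (walkOfFn H f n (fun i hi => h i (by omega))).concat (h n (by omega))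

lemma walkOfFn_length (f : ℕ → W) (n : ℕ) (h : ∀ i < n, H.Adj (f i) (f (i+1))) :
    (walkOfFn H f n h).length = n := by
  induction n with
  | zero => rfl
  | succ n ih => rw [walkOfFn, Walk.length_concat, ih]

lemma walkOfFn_support (f : ℕ → W) (n : ℕ) (h : ∀ i < n, H.Adj (f i) (f (i+1))) :
    (walkOfFn H f n h).support = (List.range (n+1)).map f := by
  induction n with
  | zero => rfl
  | succ n ih =>
    rw [walkOfFn, Walk.support_concat, ih, List.range_succ (n := n+1), List.range_succ (n := n)]
    simp

lemma walkOfFn_isPath (f : ℕ → W) (n : ℕ) (h : ∀ i < n, H.Adj (f i) (f (i+1)))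
    (hinj : ∀ i ≤ n, ∀ j ≤ n, f i = f j → i = j) : (walkOfFn H f n h).IsPath := by
  rw [Walk.isPath_def, walkOfFn_support]
  apply List.Nodup.map_on
  · intro x hx y hy hxy
    rw [List.mem_range] at hx hy
    exact hinj x (by omega) y (by omega) hxy
  · exact List.nodup_range

lemma mem_walkOfFn_support {f : ℕ → W} {n : ℕ} {h : ∀ i < n, H.Adj (f i) (f (i+1))} {x : W} :
    x ∈ (walkOfFn H f n h).support ↔ ∃ i ≤ n, f i = x := by
  rw [walkOfFn_support]
  simp only [List.mem_map, List.mem_range]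
  constructor
  · rintro ⟨i, hi, rfl⟩; exact ⟨i, by omega, rfl⟩
  · rintro ⟨i, hi, rfl⟩; exact ⟨i, by omega, rfl⟩

/-- Rotation-extension: from a path `p`, a "crossing" pair of chords and an outside
vertex attached at position `j ≤ i`, build a strictly longer path. -/
lemma rotate_extend {x0 xl : W} {p : H.Walk x0 xl} (hp : p.IsPath) {i j : ℕ}
    (hi : i < p.length) (hj : j ≤ i)
    (h0 : H.Adj x0 (p.getVert (i+1))) (hl : H.Adj xl (p.getVert i))
    {y : W} (hy : y ∉ p.support) (hyz : H.Adj y (p.getVert j)) :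
    ∃ (a b : W) (q : H.Walk a b), q.IsPath ∧
      (∀ x ∈ q.support, x = y ∨ x ∈ p.support) ∧ q.length = p.length + 1 := by
  set ℓ := p.length with hℓ
  set g := p.getVert with hg
  have hginj : ∀ s ≤ ℓ, ∀ s' ≤ ℓ, g s = g s' → s = s' := getVert_injOn_of_isPath hp
  have hadjg : ∀ t, t < ℓ → H.Adj (g t) (g (t+1)) := fun t ht => p.adj_getVert_succ ht
  have hx0 : g 0 = x0 := p.getVert_zero
  have hxl : g ℓ = xl := p.getVert_length
  -- index function
  set idx : ℕ → ℕ := fun s => if s ≤ j + 1 then j + 1 - s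
    else if s ≤ ℓ - i + j + 1 then i + s - j - 1 else ℓ + j + 2 - s with hidx
  set f : ℕ → W := fun s => if s = 0 then y else g (idx s) with hf
  have hidx_le : ∀ s, 1 ≤ s → s ≤ ℓ + 1 → idx s ≤ ℓ := by
    intro s h1 h2; simp only [hidx]; split_ifs <;> omega
  have hidx_inj : ∀ s, 1 ≤ s → s ≤ ℓ + 1 → ∀ s', 1 ≤ s' → s' ≤ ℓ + 1 →
      idx s = idx s' → s = s' := by
    intro s hs1 hs2 s' hs1' hs2'
    simp only [hidx]
    split_ifs <;> omega
  have hfg : ∀ s, 1 ≤ s → f s = g (idx s) := by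
    intro s hs; simp only [hf]; rw [if_neg (by omega)]
  -- adjacency
  have hadj : ∀ s, s < ℓ + 1 → H.Adj (f s) (f (s + 1)) := by
    intro s hs
    rcases Nat.eq_zero_or_pos s with rfl | hs1
    · -- s = 0 : y → g j
      have h1 : f 0 = y := by simp [hf]
      have h2 : f 1 = g j := by
        rw [hfg 1 le_rfl]
        congr 1
      rw [Nat.zero_add, h1, h2]
      exact hyz
    · rw [hfg s hs1, hfg (s+1) (by omega)]
      by_cases c1 : s ≤ j
      · -- within first block (descending)
        have e1 : idx s = (j - s) + 1 := by simp only [hidx]; rw [if_pos (by omega)]; omega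
        have e2 : idx (s+1) = j - s := by simp only [hidx]; rw [if_pos (by omega)]; omega
        rw [e1, e2]
        exact (hadjg (j - s) (by omega)).symm
      · by_cases c2 : s = j + 1
        · -- joint: g 0 → g (i+1)
          have e1 : idx s = 0 := by simp only [hidx]; rw [if_pos (by omega)]; omega
          have e2 : idx (s+1) = i + 1 := by
            simp only [hidx]; rw [if_neg (by omega), if_pos (by omega)]; omega
          rw [e1, e2, hx0]
          exact h0
        · by_cases c3 : s ≤ ℓ - i + j
          · -- within second block (ascending)
            have e1 : idx s = i + s - j - 1 := by
              simp only [hidx]; rw [if_neg (by omega), if_pos (by omega)]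
            have e2 : idx (s+1) = (i + s - j - 1) + 1 := by
              simp only [hidx]; rw [if_neg (by omega), if_pos (by omega)]; omega
            rw [e1, e2]
            exact hadjg (i + s - j - 1) (by omega)
          · by_cases c4 : s = ℓ - i + j + 1
            · -- joint: g ℓ → g i
              have e1 : idx s = ℓ := by
                simp only [hidx]; rw [if_neg (by omega), if_pos (by omega)]; omega
              have e2 : idx (s+1) = i := by
                simp only [hidx]; rw [if_neg (by omega), if_neg (by omega)]; omega
              rw [e1, e2, hxl]
              exact hl
            · -- within third block (descending)
              have e1 : idx s = (ℓ + j + 1 - s) + 1 := by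
                simp only [hidx]; rw [if_neg (by omega), if_neg (by omega)]; omega
              have e2 : idx (s+1) = ℓ + j + 1 - s := by
                simp only [hidx]; rw [if_neg (by omega), if_neg (by omega)]; omega
              rw [e1, e2]
              exact (hadjg (ℓ + j + 1 - s) (by omega)).symm
  have hfinj : ∀ s ≤ ℓ + 1, ∀ s' ≤ ℓ + 1, f s = f s' → s = s' := by
    intro s hs s' hs' heq
    rcases Nat.eq_zero_or_pos s with rfl | hs1 <;> rcases Nat.eq_zero_or_pos s' with rfl | hs1'
    · rfl
    · exfalso
      rw [hfg s' hs1'] at heq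
      have : f 0 = y := by simp [hf]
      rw [this] at heq
      exact hy (heq ▸ getVert_mem_support' p (idx s'))
    · exfalso
      rw [hfg s hs1] at heq
      have : f 0 = y := by simp [hf]
      rw [this] at heq
      exact hy (heq.symm ▸ getVert_mem_support' p (idx s))
    · rw [hfg s hs1, hfg s' hs1'] at heq
      exact hidx_inj s hs1 hs s' hs1' hs'
        (hginj _ (hidx_le s hs1 hs) _ (hidx_le s' hs1' hs') heq)
  refine ⟨f 0, f (ℓ + 1), walkOfFn H f (ℓ+1) hadj, ?_, ?_, ?_⟩
  · exact walkOfFn_isPath f (ℓ+1) hadj hfinj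
  · intro x hx
    obtain ⟨s, hs, rfl⟩ := mem_walkOfFn_support.mp hx
    rcases Nat.eq_zero_or_pos s with rfl | hs1
    · left; simp [hf]
    · right
      rw [hfg s hs1]
      exact getVert_mem_support' p (idx s)
  · exact walkOfFn_length f (ℓ+1) hadj

lemma connected_case (H : SimpleGraph W) (m : ℕ) (hm : 2 ≤ m) (S : Finset W)
    (hS : ∀ (a b : W) (q : H.Walk a b), q.IsPath → (∀ x ∈ q.support, x ∈ S) →
      q.length + 2 ≤ m)
    (hmS : m ≤ S.card)
    (hdeg : ∀ v ∈ S, m ≤ 2 * dIn H S v + 1)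
    (v₀ : W) (hv₀ : v₀ ∈ S)
    (hconn : ∀ w ∈ S, ∃ q : H.Walk v₀ w, ∀ x ∈ q.support, x ∈ S) : False := by
  classical
  set PP : ℕ → Prop := fun l => ∃ (a b : W) (q : H.Walk a b), q.IsPath ∧
    (∀ x ∈ q.support, x ∈ S) ∧ q.length = l with hPP
  have hbound : ∀ l, PP l → l ≤ Fintype.card W := by
    rintro l ⟨a, b, q, hq, -, rfl⟩
    exact le_of_lt hq.length_lt
  have hPP0 : PP 0 := ⟨v₀, v₀, Walk.nil, Walk.IsPath.nil, by simp [hv₀], rfl⟩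
  set L := Nat.findGreatest PP (Fintype.card W) with hLdef
  have hPPL : PP L := Nat.findGreatest_spec (Nat.zero_le _) hPP0
  have hmax : ∀ l, PP l → l ≤ L := by
    intro l hl
    by_contra hlt
    exact Nat.findGreatest_is_greatest (by omega) (hbound l hl) hl
  obtain ⟨x0, xl, p, hp, hsup, hlen⟩ := hPPL
  have hx0S : x0 ∈ S := hsup _ p.start_mem_support
  have hxlS : xl ∈ S := hsup _ p.end_mem_support
  have hL2 : p.length + 2 ≤ m := hS _ _ p hp hsup
  have hginj : ∀ s ≤ p.length, ∀ s' ≤ p.length, p.getVert s = p.getVert s' → s = s' :=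
    getVert_injOn_of_isPath hp
  -- neighbours of endpoints lie on the path
  have hfront : ∀ w ∈ S, H.Adj x0 w → w ∈ p.support := by
    intro w hw hadj
    by_contra hnmem
    have hPP1 : PP (p.length + 1) := ⟨w, xl, Walk.cons hadj.symm p,
      (Walk.cons_isPath_iff _ _).2 ⟨hp, hnmem⟩, by
        intro x hx
        rw [Walk.support_cons, List.mem_cons] at hx
        rcases hx with rfl | hx
        · exact hw
        · exact hsup x hx, by simp⟩
    have := hmax _ hPP1
    omega
  have hback : ∀ w ∈ S, H.Adj xl w → w ∈ p.support := by
    intro w hw hadj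
    by_contra hnmem
    have hnmem' : w ∉ p.reverse.support := by
      rw [Walk.support_reverse, List.mem_reverse]; exact hnmem
    have hPP1 : PP (p.length + 1) := ⟨w, x0, Walk.cons hadj.symm p.reverse,
      (Walk.cons_isPath_iff _ _).2 ⟨hp.reverse, hnmem'⟩, by
        intro x hx
        rw [Walk.support_cons, List.mem_cons] at hx
        rcases hx with rfl | hx
        · exact hw
        · rw [Walk.support_reverse, List.mem_reverse] at hx
          exact hsup x hx, by simp⟩
    have := hmax _ hPP1
    omega
  -- pigeonhole for crossing chords
  set A : Finset ℕ := (Finset.range p.length).filter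
    (fun i => H.Adj x0 (p.getVert (i+1))) with hA
  set B : Finset ℕ := (Finset.range p.length).filter
    (fun i => H.Adj xl (p.getVert i)) with hB
  have hcardA : A.card = dIn H S x0 := by
    apply Finset.card_nbij (fun i => p.getVert (i+1))
    · intro a ha
      simp only [hA, Finset.coe_filter, Set.mem_setOf_eq, Finset.mem_range] at ha
      exact Finset.mem_filter.2 ⟨hsup _ (getVert_mem_support' p _), ha.2⟩
    · intro a ha b hb heq
      simp only [hA, Finset.coe_filter, Set.mem_setOf_eq, Finset.mem_range] at ha hb
      have := hginj (a+1) (by omega) (b+1) (by omega) heq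
      omega
    · intro w hw
      simp only [Finset.coe_filter, Set.mem_setOf_eq] at hw
      have hmem := hfront w hw.1 hw.2
      obtain ⟨n, hgn, hnle⟩ := Walk.mem_support_iff_exists_getVert.mp hmem
      have hn0 : n ≠ 0 := by
        rintro rfl
        rw [Walk.getVert_zero] at hgn
        exact hw.2.ne hgn
      refine ⟨n - 1, ?_, ?_⟩
      · simp only [hA, Finset.coe_filter, Set.mem_setOf_eq, Finset.mem_range]
        constructor
        · omega
        · have : n - 1 + 1 = n := by omega
          rw [this, hgn]; exact hw.2
      · simp only []
        have : n - 1 + 1 = n := by omega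
        rw [this, hgn]
  have hcardB : B.card = dIn H S xl := by
    apply Finset.card_nbij (fun i => p.getVert i)
    · intro a ha
      simp only [hB, Finset.coe_filter, Set.mem_setOf_eq, Finset.mem_range] at ha
      exact Finset.mem_filter.2 ⟨hsup _ (getVert_mem_support' p _), ha.2⟩
    · intro a ha b hb heq
      simp only [hB, Finset.coe_filter, Set.mem_setOf_eq, Finset.mem_range] at ha hb
      exact hginj a (by omega) b (by omega) heq
    · intro w hw
      simp only [Finset.coe_filter, Set.mem_setOf_eq] at hw
      have hmem := hback w hw.1 hw.2
      obtain ⟨n, hgn, hnle⟩ := Walk.mem_support_iff_exists_getVert.mp hmem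
      have hnL : n ≠ p.length := by
        rintro rfl
        rw [Walk.getVert_length] at hgn
        exact hw.2.ne hgn
      refine ⟨n, ?_, hgn⟩
      simp only [hB, Finset.coe_filter, Set.mem_setOf_eq, Finset.mem_range]
      exact ⟨by omega, hgn.symm ▸ hw.2⟩
  have hABsub : A ∪ B ⊆ Finset.range p.length := by
    intro x hx
    rcases Finset.mem_union.mp hx with hx | hx
    · exact (Finset.mem_filter.mp hx).1
    · exact (Finset.mem_filter.mp hx).1
  have hABne : (A ∩ B).Nonempty := by
    rw [Finset.nonempty_iff_ne_empty]
    intro hemp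
    have h1 : A.card + B.card = (A ∪ B).card + (A ∩ B).card :=
      (Finset.card_union_add_card_inter A B).symm
    rw [hemp] at h1
    have h2 : (A ∪ B).card ≤ p.length := by
      simpa using Finset.card_le_card hABsub
    have hd0 := hdeg x0 hx0S
    have hdl := hdeg xl hxlS
    rw [← hcardA] at hd0
    rw [← hcardB] at hdl
    simp at h1
    omega
  obtain ⟨i, hiAB⟩ := hABne
  rw [Finset.mem_inter] at hiAB
  have hiA := Finset.mem_filter.mp hiAB.1
  have hiB := Finset.mem_filter.mp hiAB.2
  rw [Finset.mem_range] at hiA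
  have hiL : i < p.length := hiA.1
  have hadj0 : H.Adj x0 (p.getVert (i+1)) := hiA.2
  have hadjl : H.Adj xl (p.getVert i) := hiB.2
  -- a vertex outside the path
  have houtside : ∃ y ∈ S, y ∉ p.support := by
    by_contra hcon
    push_neg at hcon
    have hsub : S ⊆ p.support.toFinset := fun y hy => List.mem_toFinset.2 (hcon y hy)
    have h1 : S.card ≤ p.support.toFinset.card := Finset.card_le_card hsub
    have h2 : p.support.toFinset.card ≤ p.support.length := p.support.toFinset_card_le
    rw [Walk.length_support] at h2
    omega
  obtain ⟨y, hyS, hynp⟩ := houtside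
  -- boundary pair
  have hbdry : ∀ (c y' : W) (q : H.Walk c y'), c ∈ p.support → y' ∉ p.support →
      (∀ x ∈ q.support, x ∈ S) →
      ∃ z w, z ∈ p.support ∧ w ∈ S ∧ w ∉ p.support ∧ H.Adj z w := by
    intro c y' q
    induction q with
    | nil => intro hc hy _; exact absurd hc hy
    | @cons a b d h q ih =>
      intro hc hy hsub
      by_cases hb : b ∈ p.support
      · exact ih hb hy (fun x hx => hsub x (by rw [Walk.support_cons]; exact List.mem_cons_of_mem _ hx))
      · exact ⟨a, b, hc, hsub b (by rw [Walk.support_cons]; exact List.mem_cons_of_mem _ q.start_mem_support), hb, h⟩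
  obtain ⟨q1, hq1⟩ := hconn x0 hx0S
  obtain ⟨q2, hq2⟩ := hconn y hyS
  have hqsup : ∀ x ∈ (q1.reverse.append q2).support, x ∈ S := by
    intro x hx
    rw [Walk.mem_support_append_iff] at hx
    rcases hx with hx | hx
    · rw [Walk.support_reverse, List.mem_reverse] at hx
      exact hq1 x hx
    · exact hq2 x hx
  obtain ⟨z, w, hzp, hwS, hwnp, hzw⟩ :=
    hbdry x0 y (q1.reverse.append q2) p.start_mem_support hynp hqsup
  obtain ⟨n, hgn, hnle⟩ := Walk.mem_support_iff_exists_getVert.mp hzp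
  -- contradiction via rotation-extension
  have hfin : ∃ (a b : W) (q : H.Walk a b), q.IsPath ∧
      (∀ x ∈ q.support, x ∈ S) ∧ q.length = p.length + 1 := by
    by_cases hni : n ≤ i
    · obtain ⟨a, b, q, hq, hqsup', hqlen⟩ := rotate_extend hp hiL hni hadj0 hadjl
        hwnp (hgn ▸ hzw.symm)
      exact ⟨a, b, q, hq, fun x hx => by
        rcases hqsup' x hx with rfl | hx
        · exact hwS
        · exact hsup x hx, hqlen⟩
    · -- use the reversed path
      have hrev := hp.reverse
      have hL1 : 1 ≤ p.length := by omega
      have e0 : p.reverse.getVert ((p.length - 1 - i) + 1) = p.getVert i := by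
        rw [Walk.getVert_reverse]
        congr 1
        omega
      have e1 : p.reverse.getVert (p.length - 1 - i) = p.getVert (i+1) := by
        rw [Walk.getVert_reverse]
        congr 1
        omega
      have e2 : p.reverse.getVert (p.length - n) = p.getVert n := by
        rw [Walk.getVert_reverse]
        congr 1
        omega
      have hynp' : y ∉ p.reverse.support := by
        rw [Walk.support_reverse, List.mem_reverse]; exact hynp
      have hwnp' : w ∉ p.reverse.support := by
        rw [Walk.support_reverse, List.mem_reverse]; exact hwnp
      obtain ⟨a, b, q, hq, hqsup', hqlen⟩ := rotate_extend hrev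
        (by rw [Walk.length_reverse]; omega : p.length - 1 - i < p.reverse.length)
        (by omega : p.length - n ≤ p.length - 1 - i)
        (e0 ▸ hadjl) (e1 ▸ hadj0) hwnp' (e2 ▸ (hgn ▸ hzw.symm))
      refine ⟨a, b, q, hq, fun x hx => ?_, by rw [hqlen, Walk.length_reverse]⟩
      rcases hqsup' x hx with rfl | hx
      · exact hwS
      · rw [Walk.support_reverse, List.mem_reverse] at hx
        exact hsup x hx
  obtain ⟨a, b, q, hq, hqsup', hqlen⟩ := hfin
  have := hmax _ ⟨a, b, q, hq, hqsup', hqlen⟩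
  omega

end Walks

theorem EG (H : SimpleGraph W) (m : ℕ) (hm : 2 ≤ m) (S : Finset W)
    (hS : ∀ (a b : W) (q : H.Walk a b), q.IsPath → (∀ x ∈ q.support, x ∈ S) →
      q.length + 2 ≤ m) :
    2 * eIn H S ≤ (m - 2) * S.card := by
  classical
  induction S using Finset.strongInduction with
  | _ S ih =>
    by_cases h1 : S.card + 1 ≤ m
    · calc 2 * eIn H S ≤ S.card * (S.card - 1) := eIn_le H S
        _ ≤ S.card * (m - 2) := Nat.mul_le_mul_left _ (by omega)
        _ = (m - 2) * S.card := Nat.mul_comm _ _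
    push_neg at h1
    have hmS : m ≤ S.card := by omega
    by_cases h2 : ∃ v ∈ S, 2 * dIn H S v + 2 ≤ m
    · obtain ⟨v, hv, hdv⟩ := h2
      have hrec := ih (S.erase v) (Finset.erase_ssubset hv)
        (fun a b q hq hsub => hS a b q hq
          (fun x hx => Finset.erase_subset _ _ (hsub x hx)))
      have he := eIn_erase H S v
      have hce : (S.erase v).card = S.card - 1 := Finset.card_erase_of_mem hv
      rw [hce] at hrec
      have hc1 : 1 ≤ S.card := by omega
      calc 2 * eIn H S ≤ 2 * eIn H (S.erase v) + 2 * dIn H S v := by omega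
        _ ≤ (m - 2) * (S.card - 1) + (m - 2) := by omega
        _ = (m - 2) * (S.card - 1 + 1) := by ring_nf
        _ = (m - 2) * S.card := by rw [Nat.sub_add_cancel hc1]
    push_neg at h2
    have hdeg : ∀ v ∈ S, m ≤ 2 * dIn H S v + 1 := by
      intro v hv
      have := h2 v hv
      omega
    have hSne : S.Nonempty := Finset.card_pos.mp (by omega)
    obtain ⟨v₀, hv₀⟩ := hSne
    set R := S.filter (fun w => ∃ q : H.Walk v₀ w, ∀ x ∈ q.support, x ∈ S) with hR
    have hv₀R : v₀ ∈ R := Finset.mem_filter.2 ⟨hv₀, ⟨Walk.nil, by simp [hv₀]⟩⟩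
    have hclosed : ∀ a ∈ R, ∀ b ∈ S, H.Adj a b → b ∈ R := by
      intro a ha b hb hab
      obtain ⟨haS, q, hq⟩ := Finset.mem_filter.mp ha
      refine Finset.mem_filter.2 ⟨hb, ⟨q.concat hab, ?_⟩⟩
      intro x hx
      rw [Walk.support_concat, List.mem_append] at hx
      rcases hx with hx | hx
      · exact hq x hx
      · simp at hx
        exact hx ▸ hb
    by_cases h3 : R = S
    · exfalso
      refine connected_case H m hm S hS hmS hdeg v₀ hv₀ ?_
      intro w hw
      rw [← h3] at hw
      exact (Finset.mem_filter.mp hw).2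
    · have hRsub : R ⊆ S := Finset.filter_subset _ _
      have hRS : R ⊂ S := Finset.ssubset_iff_subset_ne.2 ⟨hRsub, h3⟩
      have hSR : (S \ R) ⊂ S := by
        refine Finset.ssubset_iff_subset_ne.2 ⟨Finset.sdiff_subset, fun hEq => ?_⟩
        have : v₀ ∈ S \ R := hEq.symm ▸ hv₀
        exact (Finset.mem_sdiff.mp this).2 hv₀R
      have hsplit := eIn_split H S R hRsub hclosed
      have hrecR := ih R hRS (fun a b q hq hsub => hS a b q hq
        (fun x hx => hRsub (hsub x hx)))
      have hrecSR := ih (S \ R) hSR (fun a b q hq hsub => hS a b q hq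
        (fun x hx => (Finset.mem_sdiff.mp (hsub x hx)).1))
      have hcards : R.card + (S \ R).card = S.card := by
        rw [Finset.card_sdiff_of_subset hRsub]
        have := Finset.card_le_card hRsub
        omega
      calc 2 * eIn H S = 2 * eIn H R + 2 * eIn H (S \ R) := by rw [hsplit]; ring
        _ ≤ (m - 2) * R.card + (m - 2) * (S \ R).card := by omega
        _ = (m - 2) * (R.card + (S \ R).card) := by ring
        _ = (m - 2) * S.card := by rw [hcards]

section Bridge

open SimpleGraph

variable {V : Type*} [Fintype V] {A : SimpleGraph V}

instance instFiniteSubgraph : Finite A.Subgraph := by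
  apply Finite.of_injective (fun F : A.Subgraph => (F.verts, F.Adj))
  intro F1 F2 h
  exact SimpleGraph.Subgraph.ext (congrArg Prod.fst h) (congrArg Prod.snd h)

lemma support_subset_verts (F : A.Subgraph) {a b : V} (q : F.spanningCoe.Walk a b)
    (hlen : 1 ≤ q.length) : ∀ x ∈ q.support, x ∈ F.verts := by
  have key : ∀ {a b : V} (q : F.spanningCoe.Walk a b), ∀ x ∈ q.support,
      x = a ∨ x ∈ F.verts := by
    intro a b q
    induction q with
    | nil =>
      intro x hx
      rw [SimpleGraph.Walk.support_nil, List.mem_singleton] at hx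
      exact Or.inl hx
    | @cons u v w' h r ih =>
      intro x hx
      rw [SimpleGraph.Walk.support_cons, List.mem_cons] at hx
      rcases hx with rfl | hx
      · exact Or.inl rfl
      · rcases ih x hx with rfl | hmem
        · exact Or.inr (F.edge_vert (F.adj_symm h))
        · exact Or.inr hmem
  intro x hx
  rcases key q x hx with rfl | hmem
  · cases q with
    | nil => simp at hlen
    | cons h r => exact F.edge_vert h
  · exact hmem

lemma exists_copy (F : A.Subgraph) {a b : V} (q : F.spanningCoe.Walk a b)
    (hq : q.IsPath) (hlen : 1 ≤ q.length) :
    ∃ P : A.Subgraph, P ≤ F ∧ Nonempty (P.coe ≃g SimpleGraph.pathGraph (q.length + 1)) := by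
  classical
  have hginj : ∀ s ≤ q.length, ∀ s' ≤ q.length, q.getVert s = q.getVert s' → s = s' :=
    getVert_injOn_of_isPath hq
  set P : A.Subgraph :=
    { verts := {x | x ∈ q.support}
      Adj := fun x y => q.toSubgraph.Adj x y
      adj_sub := fun h => F.adj_sub (q.toSubgraph.adj_sub h)
      edge_vert := fun h => (Walk.mem_verts_toSubgraph q).mp (q.toSubgraph.edge_vert h)
      symm := ⟨fun x y h => q.toSubgraph.adj_symm h⟩ } with hP
  have hPle : P ≤ F := by
    constructor
    · intro x hx
      exact support_subset_verts F q hlen x hx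
    · intro x y h
      exact q.toSubgraph.adj_sub h
  have hfmem : ∀ i : Fin (q.length + 1), q.getVert i ∈ P.verts := by
    intro i
    exact getVert_mem_support' q i
  set f : Fin (q.length + 1) → P.verts := fun i => ⟨q.getVert i, hfmem i⟩ with hfdef
  have hbij : Function.Bijective f := by
    constructor
    · intro i j hij
      have h1 : q.getVert i = q.getVert j := congrArg Subtype.val hij
      have := hginj i (by omega) j (by omega) h1
      exact Fin.ext this
    · rintro ⟨x, hx⟩
      obtain ⟨n, hgn, hnle⟩ := Walk.mem_support_iff_exists_getVert.mp hx
      exact ⟨⟨n, by omega⟩, Subtype.ext hgn⟩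
  have hadj_iff : ∀ i j : Fin (q.length + 1),
      P.coe.Adj (f i) (f j) ↔ (SimpleGraph.pathGraph (q.length + 1)).Adj i j := by
    intro i j
    rw [SimpleGraph.pathGraph_adj]
    constructor
    · intro h
      have hadj : q.toSubgraph.Adj (q.getVert i) (q.getVert j) := h
      obtain ⟨k, hk, hklt⟩ := (Walk.toSubgraph_adj_iff q).mp hadj
      have hne : q.getVert (i : ℕ) ≠ q.getVert (j : ℕ) := by
        intro hEq
        exact hadj.ne (by exact hEq)
      rw [Sym2.eq_iff] at hk
      rcases hk with ⟨h1, h2⟩ | ⟨h1, h2⟩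
      · have e1 := hginj k (by omega) i (by omega) h1
        have e2 := hginj (k+1) (by omega) j (by omega) h2
        left; omega
      · have e1 := hginj k (by omega) j (by omega) h1
        have e2 := hginj (k+1) (by omega) i (by omega) h2
        right; omega
    · intro h
      rcases h with h | h
      · have hlt : (i : ℕ) < q.length := by omega
        have := q.toSubgraph_adj_getVert hlt
        have hj : (j : ℕ) = (i : ℕ) + 1 := by omega
        show q.toSubgraph.Adj (q.getVert i) (q.getVert j)
        rw [hj]
        exact this
      · have hlt : (j : ℕ) < q.length := by omega
        have := q.toSubgraph_adj_getVert hlt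
        have hi : (i : ℕ) = (j : ℕ) + 1 := by omega
        show q.toSubgraph.Adj (q.getVert i) (q.getVert j)
        rw [hi]
        exact this.symm
  refine ⟨P, hPle, ⟨?_⟩⟩
  have φ : SimpleGraph.pathGraph (q.length + 1) ≃g P.coe :=
    { toEquiv := Equiv.ofBijective f hbij
      map_rel_iff' := by
        intro i j
        exact hadj_iff i j }
  exact φ.symm

lemma edgeSet_spanningCoe' (F : A.Subgraph) : F.spanningCoe.edgeSet = F.edgeSet := by
  ext e
  induction e with
  | _ x y =>
    rw [SimpleGraph.mem_edgeSet, SimpleGraph.Subgraph.mem_edgeSet]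
    exact Iff.rfl

lemma eIn_spanningCoe (F : A.Subgraph) :
    eIn F.spanningCoe F.verts.toFinset = F.edgeSet.ncard := by
  classical
  unfold eIn
  rw [Finset.filter_true_of_mem]
  · rw [← edgeSet_spanningCoe' F, ← SimpleGraph.coe_edgeFinset, Set.ncard_coe_finset]
  · intro e he
    rw [SimpleGraph.mem_edgeFinset] at he
    induction e with
    | _ x y =>
      rw [SimpleGraph.mem_edgeSet] at he
      intro z hz
      rcases Sym2.mem_iff.mp hz with rfl | rfl
      · exact Set.mem_toFinset.2 (F.edge_vert he)
      · exact Set.mem_toFinset.2 (F.edge_vert (F.adj_symm he))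

lemma verts_toFinset_card (F : A.Subgraph) : F.verts.toFinset.card = F.verts.ncard :=
  (Set.ncard_eq_toFinset_card' _).symm

lemma EG_subgraph (m : ℕ) (hm : 2 ≤ m) (F : A.Subgraph)
    (hno : ∀ P : A.Subgraph, P ≤ F → ¬ Nonempty (P.coe ≃g SimpleGraph.pathGraph m)) :
    2 * F.edgeSet.ncard ≤ (m - 2) * F.verts.ncard := by
  classical
  have hmain := EG F.spanningCoe m hm F.verts.toFinset ?_
  · rwa [eIn_spanningCoe, verts_toFinset_card] at hmain
  · intro a b q hq hsub
    by_contra hcon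
    push_neg at hcon
    have hlen : m - 1 ≤ q.length := by omega
    have hginj : ∀ s ≤ q.length, ∀ s' ≤ q.length, q.getVert s = q.getVert s' → s = s' :=
      getVert_injOn_of_isPath hq
    set q' := walkOfFn F.spanningCoe q.getVert (m-1)
      (fun i hi => q.adj_getVert_succ (by omega)) with hq'def
    have hq'path : q'.IsPath := walkOfFn_isPath _ _ _
      (fun i hi j hj hij => hginj i (by omega) j (by omega) hij)
    have hq'len : q'.length = m - 1 := walkOfFn_length _ _ _
    obtain ⟨P, hPle, hiso⟩ := exists_copy F q' hq'path (by omega)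
    rw [hq'len] at hiso
    have : m - 1 + 1 = m := by omega
    rw [this] at hiso
    exact hno P hPle hiso

lemma subgraph_complete_bound (F : A.Subgraph) :
    2 * F.edgeSet.ncard ≤ F.verts.ncard * (F.verts.ncard - 1) := by
  classical
  have := eIn_le F.spanningCoe F.verts.toFinset
  rwa [eIn_spanningCoe, verts_toFinset_card] at this

lemma removal (m : ℕ) (hm : 2 ≤ m) :
    ∀ (c : ℕ) (F : A.Subgraph),
      ({P : A.Subgraph | P ≤ F ∧ Nonempty (P.coe ≃g SimpleGraph.pathGraph m)}).ncard ≤ c →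
      2 * F.edgeSet.ncard ≤ (m - 2) * F.verts.ncard + 2 * c := by
  intro c
  induction c with
  | zero =>
    intro F hc
    have hempty : ∀ P : A.Subgraph, P ≤ F → ¬ Nonempty (P.coe ≃g SimpleGraph.pathGraph m) := by
      intro P hP hiso
      have hne : ({P : A.Subgraph | P ≤ F ∧
          Nonempty (P.coe ≃g SimpleGraph.pathGraph m)}).Nonempty := ⟨P, hP, hiso⟩
      have := (Set.ncard_pos (Set.toFinite _)).2 hne
      omega
    simpa using EG_subgraph m hm F hempty
  | succ c ih =>
    intro F hc
    by_cases hex : ∃ P : A.Subgraph, P ≤ F ∧ Nonempty (P.coe ≃g SimpleGraph.pathGraph m)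
    · obtain ⟨P₀, hP₀F, ⟨φ⟩⟩ := hex
      have h01 : (SimpleGraph.pathGraph m).Adj ⟨0, by omega⟩ ⟨1, by omega⟩ := by
        rw [SimpleGraph.pathGraph_adj]
        left
        rfl
      have hadjP : P₀.coe.Adj (φ.symm ⟨0, by omega⟩) (φ.symm ⟨1, by omega⟩) :=
        (SimpleGraph.Iso.map_adj_iff φ.symm).2 h01
      set a := (φ.symm ⟨0, by omega⟩ : P₀.verts)
      set b := (φ.symm ⟨1, by omega⟩ : P₀.verts)
      have hP₀adj : P₀.Adj ↑a ↑b := hadjP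
      set e₀ : Sym2 V := s(↑a, ↑b) with he₀
      have he₀P : e₀ ∈ P₀.edgeSet := hP₀adj
      have he₀F : e₀ ∈ F.edgeSet := SimpleGraph.Subgraph.edgeSet_mono hP₀F he₀P
      set F' := F.deleteEdges {e₀} with hF'
      have hF'edges : F'.edgeSet = F.edgeSet \ {e₀} := by
        ext e
        induction e with
        | _ x y =>
          simp [SimpleGraph.Subgraph.mem_edgeSet, hF']
      have hF'verts : F'.verts = F.verts := rfl
      have hP₀nle : ¬ P₀ ≤ F' := by
        intro hle
        have : F'.Adj ↑a ↑b := hle.2 hP₀adj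
        rw [SimpleGraph.Subgraph.deleteEdges_adj] at this
        exact this.2 (by rw [he₀]; exact rfl)
      have hsub : {P : A.Subgraph | P ≤ F' ∧ Nonempty (P.coe ≃g SimpleGraph.pathGraph m)} ⊆
          {P : A.Subgraph | P ≤ F ∧ Nonempty (P.coe ≃g SimpleGraph.pathGraph m)} \ {P₀} := by
        rintro P ⟨hPle, hPiso⟩
        refine ⟨⟨le_trans hPle (SimpleGraph.Subgraph.deleteEdges_le _), hPiso⟩, ?_⟩
        intro hPP
        rw [Set.mem_singleton_iff] at hPP
        exact hP₀nle (hPP ▸ hPle)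
      have hmem : P₀ ∈ {P : A.Subgraph | P ≤ F ∧
          Nonempty (P.coe ≃g SimpleGraph.pathGraph m)} := ⟨hP₀F, ⟨φ⟩⟩
      have hdiff : ({P : A.Subgraph | P ≤ F ∧
          Nonempty (P.coe ≃g SimpleGraph.pathGraph m)} \ {P₀}).ncard =
          ({P : A.Subgraph | P ≤ F ∧
          Nonempty (P.coe ≃g SimpleGraph.pathGraph m)}).ncard - 1 :=
        Set.ncard_diff_singleton_of_mem hmem
      have hc' : ({P : A.Subgraph | P ≤ F' ∧
          Nonempty (P.coe ≃g SimpleGraph.pathGraph m)}).ncard ≤ c := by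
        have h1 := Set.ncard_le_ncard hsub (Set.toFinite _)
        omega
      have hrec := ih F' hc'
      rw [hF'edges, hF'verts] at hrec
      have hfin : (F.edgeSet).Finite := Set.toFinite _
      have hecard : (F.edgeSet \ {e₀}).ncard = F.edgeSet.ncard - 1 :=
        Set.ncard_diff_singleton_of_mem he₀F
      have hpos : 1 ≤ F.edgeSet.ncard := (Set.ncard_pos hfin).2 ⟨e₀, he₀F⟩
      rw [hecard] at hrec
      omega
    · push_neg at hex
      have := EG_subgraph m hm F (fun P hP => not_nonempty_iff.mpr (hex P hP))
      omega

end Bridge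

end EGaux


/-- If a vertex `u` of `G` is contained in at most `t` copies of the fan `F_k`
(equivalently, the induced neighbourhood graph `G[N(u)]` contains at most `t` copies of
the path on `k-1` vertices), then every subgraph `F` of `G[N(u)]` has average degree at
most `k - 3 + √(2t)`. -/
theorem stmt3 {V : Type*} [Fintype V] (k : ℕ) (hk : 3 ≤ k) (t : ℝ) (ht : 0 ≤ t)
    (G : SimpleGraph V) (u : V)
    (hcopies : (({H' : (G.induce (G.neighborSet u)).Subgraph |
        Nonempty (H'.coe ≃g SimpleGraph.pathGraph (k - 1))}).ncard : ℝ) ≤ t) :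
    ∀ F : (G.induce (G.neighborSet u)).Subgraph, F.verts.Nonempty →
      2 * (F.edgeSet.ncard : ℝ) / (F.verts.ncard : ℝ)
        ≤ (k : ℝ) - 3 + Real.sqrt (2 * t) := by
  classical
  intro F hFne
  set m := k - 1 with hmdef
  have hm2 : 2 ≤ m := by omega
  set cs : Set (G.induce (G.neighborSet u)).Subgraph :=
    {P | P ≤ F ∧ Nonempty (P.coe ≃g SimpleGraph.pathGraph m)} with hcs
  set c₀ := cs.ncard with hc₀
  have hkey := EGaux.removal (A := G.induce (G.neighborSet u)) m hm2 c₀ F le_rfl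
  have hsub : cs ⊆ {H' : (G.induce (G.neighborSet u)).Subgraph |
      Nonempty (H'.coe ≃g SimpleGraph.pathGraph (k-1))} := by
    intro P hP
    exact hP.2
  have hc₀t : (c₀ : ℝ) ≤ t := by
    refine le_trans ?_ hcopies
    exact_mod_cast Set.ncard_le_ncard hsub (Set.toFinite _)
  set n := F.verts.ncard with hn
  set e := F.edgeSet.ncard with he
  have hn1 : 1 ≤ n := (Set.ncard_pos (Set.toFinite _)).2 hFne
  have hcomp : 2 * e ≤ n * (n - 1) := EGaux.subgraph_complete_bound F
  have hm2n : m - 2 = k - 3 := by omega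
  rw [hm2n] at hkey
  -- move to the reals
  have hnR : (0:ℝ) < (n:ℝ) := by exact_mod_cast hn1
  have hk3 : ((k - 3 : ℕ) : ℝ) = (k:ℝ) - 3 := by
    rw [Nat.cast_sub hk]
    norm_num
  have hkeyR : 2 * (e:ℝ) ≤ ((k:ℝ) - 3) * n + 2 * (c₀:ℝ) := by
    have h1 : ((2 * e : ℕ) : ℝ) ≤ (((k-3) * n + 2 * c₀ : ℕ) : ℝ) := Nat.cast_le.2 hkey
    push_cast at h1
    rw [hk3] at h1
    linarith
  have hcompR : 2 * (e:ℝ) ≤ (n:ℝ) * ((n:ℝ) - 1) := by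
    have h1 : ((2 * e : ℕ) : ℝ) ≤ ((n * (n-1) : ℕ) : ℝ) := Nat.cast_le.2 hcomp
    push_cast [Nat.cast_sub hn1] at h1
    linarith
  set x := Real.sqrt (2 * t) with hx
  have hx0 : 0 ≤ x := Real.sqrt_nonneg _
  have hx2 : x * x = 2 * t := Real.mul_self_sqrt (by linarith)
  have hk3R : (0:ℝ) ≤ (k:ℝ) - 3 := by
    have : (3:ℝ) ≤ (k:ℝ) := by exact_mod_cast hk
    linarith
  rw [div_le_iff₀ hnR]
  by_cases hcase : (n:ℝ) ≤ (k:ℝ) - 3 + x + 1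
  · nlinarith [hcompR, hnR, hcase]
  · push_neg at hcase
    have hxn : x ≤ (n:ℝ) := by linarith
    have h2t : 2 * t ≤ x * (n:ℝ) := by nlinarith
    nlinarith [hkeyR, hc₀t]
end

section
/- For any graph F on y vertices with average degree at most a > 0, the expected size of a random independent set drawn from the hard-core model at fugacity λ > 0 satisfies λ Z_F'(λ)/Z_F(λ) ≥ (λ/(1+λ)) · y · (1+λ)^{-a}. -/
open scoped Classical

/-- The finset of independent sets of a finite graph. -/
noncomputable def indepFinset {V : Type*} [Fintype V] (F : SimpleGraph V) :
    Finset (Finset V) :=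
  Finset.univ.filter (fun I => ∀ u ∈ I, ∀ w ∈ I, ¬ F.Adj u w)

/-- The hard-core partition function `Z_F(λ) = Σ_{I independent} λ^|I|`. -/
noncomputable def hcZ {V : Type*} [Fintype V] (F : SimpleGraph V) (lam : ℝ) : ℝ :=
  ∑ I ∈ indepFinset F, lam ^ I.card

namespace HCaux

open Finset

variable {V : Type*} [Fintype V] {F : SimpleGraph V} {lam : ℝ}

lemma mem_indep {I : Finset V} :
    I ∈ indepFinset F ↔ ∀ u ∈ I, ∀ w ∈ I, ¬ F.Adj u w := by
  simp [indepFinset]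

lemma indep_subset {I J : Finset V} (hI : I ∈ indepFinset F) (h : J ⊆ I) :
    J ∈ indepFinset F := by
  rw [mem_indep] at hI ⊢
  exact fun u hu w hw => hI u (h hu) w (h hw)

/-- restricted partition function -/
noncomputable def ZW (F : SimpleGraph V) (lam : ℝ) (W : Finset V) : ℝ :=
  ∑ I ∈ (indepFinset F).filter (fun I => I ⊆ W), lam ^ I.card

lemma Z_pos (hlam : 0 < lam) : 0 < hcZ F lam := by
  have hemp : (∅ : Finset V) ∈ indepFinset F := by simp [mem_indep]
  have : ((1:ℝ)) ≤ hcZ F lam := by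
    have := Finset.single_le_sum (f := fun I : Finset V => lam ^ I.card)
      (fun I _ => le_of_lt (pow_pos hlam _)) hemp
    simpa [hcZ] using this
  linarith

lemma lam_mul_deriv :
    lam * deriv (hcZ F) lam = ∑ I ∈ indepFinset F, (I.card : ℝ) * lam ^ I.card := by
  have hd : HasDerivAt (hcZ F)
      (∑ I ∈ indepFinset F, (I.card : ℝ) * lam ^ (I.card - 1)) lam :=
    HasDerivAt.fun_sum (fun I _ => hasDerivAt_pow I.card lam)
  rw [hd.deriv, Finset.mul_sum]
  refine Finset.sum_congr rfl fun I _ => ?_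
  rcases Nat.eq_zero_or_pos I.card with h | h
  · simp [h]
  · obtain ⟨k, hk⟩ := Nat.exists_eq_succ_of_ne_zero h.ne'
    rw [hk]
    simp only [Nat.succ_sub_one, pow_succ]
    push_cast
    ring

lemma sum_card_eq :
    (∑ I ∈ indepFinset F, (I.card : ℝ) * lam ^ I.card)
      = ∑ v : V, ∑ I ∈ (indepFinset F).filter (fun I => v ∈ I), lam ^ I.card := by
  have h1 : ∀ I : Finset V, (I.card : ℝ) * lam ^ I.card
      = ∑ v : V, (if v ∈ I then lam ^ I.card else 0) := by
    intro I
    rw [Finset.sum_ite_mem, Finset.univ_inter, Finset.sum_const, nsmul_eq_mul]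
  simp only [h1]
  rw [Finset.sum_comm]
  refine Finset.sum_congr rfl fun v _ => ?_
  rw [Finset.sum_filter]

lemma Sv_eq (hlam : 0 < lam) (v : V) :
    (∑ I ∈ (indepFinset F).filter (fun I => v ∈ I), lam ^ I.card)
      = lam * ZW F lam (insert v (F.neighborFinset v))ᶜ := by
  rw [ZW, Finset.mul_sum]
  refine Finset.sum_nbij' (i := fun I => I.erase v) (j := fun J => insert v J)
    ?_ ?_ ?_ ?_ ?_
  · intro I hI
    rw [Finset.mem_filter] at hI ⊢
    obtain ⟨hI, hv⟩ := hI
    refine ⟨indep_subset hI (Finset.erase_subset _ _), ?_⟩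
    intro u hu
    rw [Finset.mem_erase] at hu
    rw [Finset.mem_compl, Finset.mem_insert]
    push_neg
    refine ⟨hu.1, ?_⟩
    rw [SimpleGraph.mem_neighborFinset]
    exact (mem_indep.1 hI) v hv u hu.2
  · intro J hJ
    rw [Finset.mem_filter] at hJ ⊢
    obtain ⟨hJ, hsub⟩ := hJ
    have hnadj : ∀ u ∈ J, ¬ F.Adj v u := by
      intro u hu
      have := hsub hu
      rw [Finset.mem_compl, Finset.mem_insert] at this
      push_neg at this
      rw [← SimpleGraph.mem_neighborFinset]
      exact this.2
    refine ⟨?_, Finset.mem_insert_self _ _⟩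
    rw [mem_indep]
    intro u hu w hw
    rw [Finset.mem_insert] at hu hw
    rcases hu with rfl | hu <;> rcases hw with rfl | hw
    · exact F.loopless.irrefl _
    · exact hnadj w hw
    · intro h; exact hnadj u hu h.symm
    · exact (mem_indep.1 hJ) u hu w hw
  · intro I hI
    rw [Finset.mem_filter] at hI
    exact Finset.insert_erase hI.2
  · intro J hJ
    rw [Finset.mem_filter] at hJ
    have hv : v ∉ J := fun hv => by
      have := hJ.2 hv
      rw [Finset.mem_compl] at this
      exact this (Finset.mem_insert_self _ _)
    exact Finset.erase_insert hv
  · intro I hI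
    rw [Finset.mem_filter] at hI
    rw [← pow_succ']
    congr 1
    exact (Finset.card_erase_add_one hI.2).symm

lemma Z_le (hlam : 0 < lam) (N : Finset V) :
    hcZ F lam ≤ (1 + lam) ^ N.card * ZW F lam Nᶜ := by
  classical
  set t := (indepFinset F).filter (fun I => I ⊆ Nᶜ) with ht
  have hinj : ∀ I ∈ indepFinset F, ∀ J ∈ indepFinset F,
      (fun I : Finset V => (I ∩ N, I \ N)) I = (fun I : Finset V => (I ∩ N, I \ N)) J
      → I = J := by
    intro I _ J _ h
    simp only [Prod.mk.injEq] at h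
    calc I = I ∩ N ∪ I \ N := by simpa using (sup_inf_sdiff I N).symm
    _ = J ∩ N ∪ J \ N := by rw [h.1, h.2]
    _ = J := by simpa using sup_inf_sdiff J N
  calc hcZ F lam = ∑ I ∈ indepFinset F, lam ^ (I ∩ N).card * lam ^ (I \ N).card := by
        refine Finset.sum_congr rfl fun I _ => ?_
        rw [← pow_add, Finset.card_inter_add_card_sdiff]
    _ = ∑ p ∈ (indepFinset F).image (fun I => (I ∩ N, I \ N)),
          lam ^ p.1.card * lam ^ p.2.card := by
          rw [Finset.sum_image hinj]
    _ ≤ ∑ p ∈ N.powerset ×ˢ t, lam ^ p.1.card * lam ^ p.2.card := by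
        refine Finset.sum_le_sum_of_subset_of_nonneg ?_
          (fun p _ _ => le_of_lt (mul_pos (pow_pos hlam _) (pow_pos hlam _)))
        intro p hp
        rw [Finset.mem_image] at hp
        obtain ⟨I, hI, rfl⟩ := hp
        rw [Finset.mem_product]
        constructor
        · exact Finset.mem_powerset.2 Finset.inter_subset_right
        · rw [ht, Finset.mem_filter]
          refine ⟨indep_subset hI (Finset.sdiff_subset), ?_⟩
          intro u hu
          rw [Finset.mem_sdiff] at hu
          rw [Finset.mem_compl]
          exact hu.2
    _ = (∑ T ∈ N.powerset, lam ^ T.card) * ∑ J ∈ t, lam ^ J.card := by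
        rw [Finset.sum_product]
        rw [Finset.sum_mul_sum N.powerset t (fun T => lam ^ T.card) (fun J => lam ^ J.card)]
    _ = (1 + lam) ^ N.card * ZW F lam Nᶜ := by
        congr 1
        have := Finset.sum_pow_mul_eq_add_pow lam 1 N
        simpa [add_comm] using this

end HCaux

/-- For a graph `F` on `y` vertices with average degree at most `a > 0`, the expected size
of a hard-core independent set at fugacity `λ > 0` satisfies
`λ Z_F'(λ)/Z_F(λ) ≥ (λ/(1+λ)) · y · (1+λ)^(-a)`. -/
theorem stmt4 {V : Type*} [Fintype V] (F : SimpleGraph V) (a lam : ℝ)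
    (ha : 0 < a) (hlam : 0 < lam)
    (hdeg : 2 * (F.edgeSet.ncard : ℝ) / (Fintype.card V : ℝ) ≤ a) :
    lam * deriv (hcZ F) lam / hcZ F lam
      ≥ lam / (1 + lam) * (Fintype.card V : ℝ) * (1 + lam) ^ (-a) := by
  classical
  have hZ : 0 < hcZ F lam := HCaux.Z_pos hlam
  have h1l : (0:ℝ) < 1 + lam := by linarith
  rcases Nat.eq_zero_or_pos (Fintype.card V) with hy0 | hy0
  · have hr : lam / (1 + lam) * (Fintype.card V : ℝ) * (1 + lam) ^ (-a) = 0 := by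
      rw [hy0]; simp
    rw [ge_iff_le, hr]
    apply div_nonneg _ hZ.le
    rw [HCaux.lam_mul_deriv]
    exact Finset.sum_nonneg fun I _ =>
      mul_nonneg (Nat.cast_nonneg _) (le_of_lt (pow_pos hlam _))
  · have hy : (0:ℝ) < (Fintype.card V : ℝ) := by exact_mod_cast hy0
    rw [ge_iff_le, le_div_iff₀ hZ, HCaux.lam_mul_deriv, HCaux.sum_card_eq]
    have hpv : ∀ v : V, lam * (1 + lam) ^ (-((F.degree v : ℝ) + 1)) * hcZ F lam
        ≤ ∑ I ∈ (indepFinset F).filter (fun I => v ∈ I), lam ^ I.card := by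
      intro v
      rw [HCaux.Sv_eq hlam v]
      set N := insert v (F.neighborFinset v) with hN
      have hcard : N.card = F.degree v + 1 := by
        rw [hN, Finset.card_insert_of_notMem (by simp),
          SimpleGraph.card_neighborFinset_eq_degree]
      have hZle := HCaux.Z_le (F := F) hlam N
      have hpow : ((1 + lam) ^ N.card : ℝ) = (1 + lam) ^ ((F.degree v : ℝ) + 1) := by
        rw [hcard, ← Real.rpow_natCast]
        push_cast
        ring_nf
      rw [hpow] at hZle
      have hCpos : (0:ℝ) < (1 + lam) ^ ((F.degree v : ℝ) + 1) :=
        Real.rpow_pos_of_pos h1l _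
      have hZW : (1 + lam) ^ (-((F.degree v : ℝ) + 1)) * hcZ F lam
          ≤ HCaux.ZW F lam Nᶜ := by
        rw [Real.rpow_neg h1l.le, inv_mul_le_iff₀ hCpos]
        exact hZle
      rw [mul_assoc]
      exact mul_le_mul_of_nonneg_left hZW hlam.le
    refine le_trans ?_ (Finset.sum_le_sum (fun v _ => hpv v))
    have hterm : ∀ v : V, lam * (1 + lam) ^ (-((F.degree v : ℝ) + 1)) * hcZ F lam
        = lam / (1 + lam) * hcZ F lam * (1 + lam) ^ (-(F.degree v : ℝ)) := by
      intro v
      have : -((F.degree v : ℝ) + 1) = -(F.degree v : ℝ) + (-1) := by ring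
      rw [this, Real.rpow_add h1l, Real.rpow_neg_one]
      field_simp
    simp only [hterm]
    rw [← Finset.mul_sum]
    have hjensen : (Fintype.card V : ℝ) * (1 + lam) ^ (-a)
        ≤ ∑ v : V, (1 + lam) ^ (-(F.degree v : ℝ)) := by
      set y := (Fintype.card V : ℝ)
      have hds : (∑ v : V, (F.degree v : ℝ)) = 2 * (F.edgeSet.ncard : ℝ) := by
        have h1 : ∑ v : V, F.degree v = 2 * F.edgeFinset.card :=
          SimpleGraph.sum_degrees_eq_twice_card_edges F
        have h2 : F.edgeSet.ncard = F.edgeFinset.card := by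
          rw [Set.ncard_eq_toFinset_card']
          simp [SimpleGraph.edgeFinset]
        rw [h2]
        exact_mod_cast h1
      have hamgm := Real.geom_mean_le_arith_mean_weighted Finset.univ
        (fun _ : V => 1 / y) (fun v : V => (1 + lam) ^ (-(F.degree v : ℝ)))
        (fun _ _ => by positivity)
        (by rw [Finset.sum_const, nsmul_eq_mul]; field_simp; simp [y, Finset.card_univ])
        (fun v _ => (Real.rpow_pos_of_pos h1l _).le)
      have hprod : (∏ v : V, ((1 + lam) ^ (-(F.degree v : ℝ))) ^ (1 / y))
          = (1 + lam) ^ (-(2 * (F.edgeSet.ncard : ℝ) / y)) := by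
        have : ∀ v : V, ((1 + lam) ^ (-(F.degree v : ℝ))) ^ (1 / y)
            = (1 + lam) ^ (-(F.degree v : ℝ) * (1 / y)) := by
          intro v
          exact (Real.rpow_mul h1l.le _ _).symm
        simp only [this]
        rw [← Real.rpow_sum_of_pos h1l]
        congr 1
        rw [← Finset.sum_mul, Finset.sum_neg_distrib, hds]
        ring
      rw [hprod] at hamgm
      have hmono : (1 + lam) ^ (-a) ≤ (1 + lam) ^ (-(2 * (F.edgeSet.ncard : ℝ) / y)) := by
        apply Real.rpow_le_rpow_of_exponent_le (by linarith)
        linarith [hdeg]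
      have hsum : (∑ v : V, 1 / y * (1 + lam) ^ (-(F.degree v : ℝ)))
          = 1 / y * ∑ v : V, (1 + lam) ^ (-(F.degree v : ℝ)) := by
        rw [Finset.mul_sum]
      rw [hsum] at hamgm
      have := le_trans hmono hamgm
      calc y * (1 + lam) ^ (-a) ≤ y * (1 / y * ∑ v : V, (1 + lam) ^ (-(F.degree v : ℝ))) :=
            mul_le_mul_of_nonneg_left this hy.le
        _ = ∑ v : V, (1 + lam) ^ (-(F.degree v : ℝ)) := by field_simp
    calc lam / (1 + lam) * (Fintype.card V : ℝ) * (1 + lam) ^ (-a) * hcZ F lam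
        = lam / (1 + lam) * hcZ F lam * ((Fintype.card V : ℝ) * (1 + lam) ^ (-a)) := by ring
      _ ≤ lam / (1 + lam) * hcZ F lam * ∑ v : V, (1 + lam) ^ (-(F.degree v : ℝ)) := by
          apply mul_le_mul_of_nonneg_left hjensen
          positivity
end

section
/- For any graph F on y vertices with average degree at most a > 0 and any λ > 0, the logarithm of the hard-core partition function satisfies log Z_F(λ) ≥ (y/a)(1 − (1+λ)^{-a}). -/
open scoped Classical

namespace Stmt5Aux

variable {V : Type*} [Fintype V] (F : SimpleGraph V)

/-- Partition function restricted to independent sets inside `S`. -/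
noncomputable def Zs (S : Finset V) (t : ℝ) : ℝ :=
  ∑ I ∈ (indepFinset F).filter (· ⊆ S), t ^ I.card

lemma mem_indep {I : Finset V} :
    I ∈ indepFinset F ↔ ∀ u ∈ I, ∀ w ∈ I, ¬ F.Adj u w := by
  simp [indepFinset]

lemma indep_subset {I J : Finset V} (hI : I ∈ indepFinset F) (hJI : J ⊆ I) :
    J ∈ indepFinset F := by
  rw [mem_indep] at hI ⊢
  exact fun u hu w hw => hI u (hJI hu) w (hJI hw)

lemma empty_mem : (∅ : Finset V) ∈ indepFinset F := by simp [mem_indep]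

lemma one_le_Zs {t : ℝ} (ht : 0 ≤ t) (S : Finset V) : 1 ≤ Zs F S t := by
  have hempty : (∅ : Finset V) ∈ (indepFinset F).filter (· ⊆ S) := by
    simp [empty_mem F]
  have := Finset.single_le_sum (f := fun I : Finset V => t ^ I.card)
    (fun i _ => pow_nonneg ht _) hempty
  simpa [Zs] using this

lemma Zs_pos {t : ℝ} (ht : 0 ≤ t) (S : Finset V) : 0 < Zs F S t :=
  lt_of_lt_of_le one_pos (one_le_Zs F ht S)

lemma Zs_mono {t : ℝ} (ht : 0 ≤ t) {A B : Finset V} (hAB : A ⊆ B) :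
    Zs F A t ≤ Zs F B t := by
  apply Finset.sum_le_sum_of_subset_of_nonneg
  · exact Finset.monotone_filter_right _ (fun I _ hIA => hIA.trans hAB)
  · exact fun I _ _ => pow_nonneg ht _

lemma Zs_erase {t : ℝ} (ht : 0 ≤ t) (S : Finset V) (v : V) :
    Zs F S t ≤ (1 + t) * Zs F (S.erase v) t := by
  classical
  set D := (indepFinset F).filter (· ⊆ S) with hD
  have hsplit : Zs F S t =
      (∑ I ∈ D.filter (fun I => v ∈ I), t ^ I.card)
        + ∑ I ∈ D.filter (fun I => v ∉ I), t ^ I.card := by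
    rw [Zs, Finset.sum_filter_add_sum_filter_not]
  have hB : D.filter (fun I => v ∉ I) = (indepFinset F).filter (· ⊆ S.erase v) := by
    rw [hD, Finset.filter_filter]
    apply Finset.filter_congr
    intro I _
    simp [Finset.subset_erase, and_comm]
  have hA : (∑ I ∈ D.filter (fun I => v ∈ I), t ^ I.card)
      ≤ t * Zs F (S.erase v) t := by
    have h1 : ∀ I ∈ D.filter (fun I => v ∈ I), t ^ I.card = t * t ^ (I.erase v).card := by
      intro I hI
      rw [Finset.mem_filter] at hI
      rw [Finset.card_erase_of_mem hI.2, ← pow_succ']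
      congr 1
      exact (Nat.succ_pred_eq_of_pos (Finset.card_pos.2 ⟨v, hI.2⟩)).symm
    rw [Finset.sum_congr rfl h1, ← Finset.mul_sum]
    apply mul_le_mul_of_nonneg_left _ ht
    have hinj : ∀ I ∈ D.filter (fun I => v ∈ I), ∀ J ∈ D.filter (fun I => v ∈ I),
        I.erase v = J.erase v → I = J := by
      intro I hI J hJ hIJ
      rw [Finset.mem_filter] at hI hJ
      have := congrArg (insert v) hIJ
      simpa [Finset.insert_erase hI.2, Finset.insert_erase hJ.2] using this
    have him : ∑ J ∈ (D.filter (fun I => v ∈ I)).image (fun I => I.erase v), t ^ J.card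
        = ∑ I ∈ D.filter (fun I => v ∈ I), t ^ (I.erase v).card :=
      Finset.sum_image hinj
    rw [← him]
    apply Finset.sum_le_sum_of_subset_of_nonneg
    · intro J hJ
      rw [Finset.mem_image] at hJ
      obtain ⟨I, hI, rfl⟩ := hJ
      rw [hD, Finset.mem_filter, Finset.mem_filter] at hI
      rw [Finset.mem_filter]
      refine ⟨indep_subset F hI.1.1 (Finset.erase_subset _ _), ?_⟩
      exact Finset.erase_subset_erase v hI.1.2
    · exact fun I _ _ => pow_nonneg ht _
  calc Zs F S t = _ := hsplit
    _ ≤ t * Zs F (S.erase v) t + Zs F (S.erase v) t := by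
        rw [hB]; exact add_le_add_left hA _
    _ = (1 + t) * Zs F (S.erase v) t := by ring
lemma Zs_sdiff {t : ℝ} (ht : 0 ≤ t) (S B : Finset V) :
    Zs F S t ≤ (1 + t) ^ B.card * Zs F (S \ B) t := by
  classical
  induction B using Finset.induction_on with
  | empty => simp
  | @insert v B hv ih =>
      calc Zs F S t ≤ (1 + t) ^ B.card * Zs F (S \ B) t := ih
        _ ≤ (1 + t) ^ B.card * ((1 + t) * Zs F ((S \ B).erase v) t) := by
            apply mul_le_mul_of_nonneg_left (Zs_erase F ht _ v)
            positivity
        _ = (1 + t) ^ (insert v B).card * Zs F (S \ insert v B) t := by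
            rw [Finset.card_insert_of_notMem hv, Finset.sdiff_insert]
            ring

/-- closed neighbourhood of `v` as a finset -/
noncomputable def M (v : V) : Finset V := insert v (F.neighborFinset v)

lemma card_M (v : V) : (M F v).card = F.degree v + 1 := by
  rw [M, Finset.card_insert_of_notMem (SimpleGraph.notMem_neighborFinset_self F v)]
  rw [F.card_neighborFinset_eq_degree]

lemma filter_subset_univ :
    (indepFinset F).filter (· ⊆ (Finset.univ : Finset V)) = indepFinset F :=
  Finset.filter_true_of_mem (fun I _ => Finset.subset_univ I)

lemma hcZ_eq (t : ℝ) : hcZ F t = Zs F Finset.univ t := by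
  rw [Zs, filter_subset_univ, hcZ]

lemma Z_hasDerivAt (t : ℝ) :
    HasDerivAt (fun s => Zs F Finset.univ s)
      (∑ v, Zs F (Finset.univ \ M F v) t) t := by
  classical
  have h1 : HasDerivAt (fun s => Zs F Finset.univ s)
      (∑ I ∈ (indepFinset F).filter (· ⊆ (Finset.univ : Finset V)),
        (I.card : ℝ) * t ^ (I.card - 1)) t := by
    apply HasDerivAt.fun_sum
    intro I _
    exact hasDerivAt_pow I.card t
  convert h1 using 1
  rw [filter_subset_univ]
  set D := indepFinset F with hD
  have step1 : ∀ I ∈ D, (I.card : ℝ) * t ^ (I.card - 1)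
      = ∑ v ∈ Finset.univ, if v ∈ I then t ^ (I.card - 1) else 0 := by
    intro I _
    rw [Finset.sum_ite_mem, Finset.univ_inter, Finset.sum_const, nsmul_eq_mul]
  rw [show (∑ I ∈ D, (I.card : ℝ) * t ^ (I.card - 1))
      = ∑ I ∈ D, ∑ v ∈ Finset.univ, (if v ∈ I then t ^ (I.card - 1) else 0) from
      Finset.sum_congr rfl step1, Finset.sum_comm]
  apply Finset.sum_congr rfl
  intro v _
  rw [← Finset.sum_filter]
  rw [Zs]
  apply Finset.sum_nbij' (i := fun J => insert v J) (j := fun I => I.erase v)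
  · -- J indep, J ⊆ univ \ M v  →  insert v J indep and v ∈ insert v J
    intro J hJ
    rw [Finset.mem_filter] at hJ
    have hnb : ∀ x ∈ J, x ≠ v ∧ ¬ F.Adj v x := by
      intro x hx
      have := hJ.2 hx
      rw [Finset.mem_sdiff, M, Finset.mem_insert] at this
      push_neg at this
      rw [SimpleGraph.mem_neighborFinset] at this
      exact this.2
    rw [Finset.mem_filter]
    constructor
    · rw [mem_indep]
      intro u hu w hw
      rw [Finset.mem_insert] at hu hw
      rcases hu with rfl | hu <;> rcases hw with rfl | hw
      · exact fun h => F.loopless.irrefl _ h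
      · exact (hnb w hw).2
      · exact fun h => (hnb u hu).2 h.symm
      · exact (mem_indep F).1 hJ.1 u hu w hw
    · exact Finset.mem_insert_self v J
  · -- I indep, v ∈ I → I.erase v indep and ⊆ univ \ M v
    intro I hI
    rw [Finset.mem_filter] at hI
    rw [Finset.mem_filter]
    refine ⟨indep_subset F hI.1 (Finset.erase_subset _ _), ?_⟩
    intro u hu
    rw [Finset.mem_erase] at hu
    rw [Finset.mem_sdiff]
    refine ⟨Finset.mem_univ u, ?_⟩
    rw [M, Finset.mem_insert]
    push_neg
    refine ⟨hu.1, ?_⟩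
    rw [SimpleGraph.mem_neighborFinset]
    exact (mem_indep F).1 hI.1 v hI.2 u hu.2
  · intro J hJ
    rw [Finset.mem_filter] at hJ
    have hvJ : v ∉ J := by
      intro hv
      have := hJ.2 hv
      rw [Finset.mem_sdiff] at this
      exact this.2 (Finset.mem_insert_self v _)
    exact Finset.erase_insert hvJ
  · intro I hI
    rw [Finset.mem_filter] at hI
    exact Finset.insert_erase hI.2
  · intro J hJ
    rw [Finset.mem_filter] at hJ
    have hvJ : v ∉ J := by
      intro hv
      have := hJ.2 hv
      rw [Finset.mem_sdiff] at this
      exact this.2 (Finset.mem_insert_self v _)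
    rw [Finset.card_insert_of_notMem hvJ, Nat.add_sub_cancel]

lemma Zs_zero (S : Finset V) : Zs F S 0 = 1 := by
  rw [Zs, Finset.sum_eq_single_of_mem (∅ : Finset V) (by simp [empty_mem F])
    (fun I _ hne => zero_pow (by simpa [← Finset.card_eq_zero] using hne))]
  simp

lemma convex_f (c : ℝ) : ConvexOn ℝ Set.univ (fun x : ℝ => Real.exp (-(x + 1) * c)) := by
  refine ⟨convex_univ, ?_⟩
  intro x _ y _ p q hp hq hpq
  simp only [smul_eq_mul]
  rw [show -(p * x + q * y + 1) * c = p * (-(x + 1) * c) + q * (-(y + 1) * c) from by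
    linear_combination c * hpq]
  simpa using convexOn_exp.2 (Set.mem_univ (-(x+1)*c)) (Set.mem_univ (-(y+1)*c)) hp hq hpq

lemma jensen_step {t aa : ℝ} (ht : 0 ≤ t) (hn : 0 < Fintype.card V)
    (hdeg : (∑ v, (F.degree v : ℝ)) / (Fintype.card V : ℝ) ≤ aa) :
    (Fintype.card V : ℝ) * (1 + t) ^ (-(aa + 1)) ≤ ∑ v, (1 + t) ^ (-((F.degree v : ℝ) + 1)) := by
  classical
  set c := Real.log (1 + t) with hc
  have h1t : (0:ℝ) < 1 + t := by linarith
  have hcnn : 0 ≤ c := Real.log_nonneg (by linarith)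
  have hrw : ∀ x : ℝ, (1 + t) ^ (-(x + 1)) = Real.exp (-(x + 1) * c) := by
    intro x
    rw [Real.rpow_def_of_pos h1t, mul_comm]
  have hn' : (0:ℝ) < Fintype.card V := by exact_mod_cast hn
  have hwsum : ∑ _v : V, (Fintype.card V : ℝ)⁻¹ = 1 := by
    rw [Finset.sum_const, Finset.card_univ, nsmul_eq_mul, mul_inv_cancel₀ hn'.ne']
  have hJ := (convex_f c).map_sum_le (t := Finset.univ)
      (w := fun _ : V => (Fintype.card V : ℝ)⁻¹) (p := fun v => (F.degree v : ℝ))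
      (fun _ _ => by positivity) hwsum (fun _ _ => Set.mem_univ _)
  simp only [smul_eq_mul] at hJ
  set A := ∑ v, (Fintype.card V : ℝ)⁻¹ * (F.degree v : ℝ) with hA
  have hAle : A ≤ aa := by
    rw [hA, ← Finset.mul_sum]
    calc (Fintype.card V : ℝ)⁻¹ * ∑ v, (F.degree v : ℝ)
        = (∑ v, (F.degree v : ℝ)) / (Fintype.card V : ℝ) := by ring
      _ ≤ aa := hdeg
  have hmono : Real.exp (-(aa + 1) * c) ≤ Real.exp (-(A + 1) * c) := by
    apply Real.exp_le_exp.2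
    nlinarith
  calc (Fintype.card V : ℝ) * (1 + t) ^ (-(aa + 1))
      = (Fintype.card V : ℝ) * Real.exp (-(aa + 1) * c) := by rw [hrw]
    _ ≤ (Fintype.card V : ℝ) * Real.exp (-(A + 1) * c) := by
        exact mul_le_mul_of_nonneg_left hmono hn'.le
    _ ≤ (Fintype.card V : ℝ) * ∑ v, (Fintype.card V : ℝ)⁻¹ * Real.exp (-((F.degree v : ℝ) + 1) * c) := by
        exact mul_le_mul_of_nonneg_left hJ hn'.le
    _ = ∑ v, Real.exp (-((F.degree v : ℝ) + 1) * c) := by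
        rw [← Finset.mul_sum, ← mul_assoc, mul_inv_cancel₀ hn'.ne', one_mul]
    _ = ∑ v, (1 + t) ^ (-((F.degree v : ℝ) + 1)) := by
        exact Finset.sum_congr rfl (fun v _ => (hrw _).symm)

lemma deriv_bound {t aa : ℝ} (ht : 0 ≤ t) (hn : 0 < Fintype.card V)
    (hdeg : (∑ v, (F.degree v : ℝ)) / (Fintype.card V : ℝ) ≤ aa) :
    (Fintype.card V : ℝ) * (1 + t) ^ (-(aa + 1)) * Zs F Finset.univ t
      ≤ ∑ v, Zs F (Finset.univ \ M F v) t := by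
  have h1t : (0:ℝ) < 1 + t := by linarith
  have hper : ∀ v : V, (1 + t) ^ (-((F.degree v : ℝ) + 1)) * Zs F Finset.univ t
      ≤ Zs F (Finset.univ \ M F v) t := by
    intro v
    have h5 := Zs_sdiff F ht Finset.univ (M F v)
    have hpow : (((1 + t) ^ (M F v).card : ℝ)) = (1 + t) ^ (((F.degree v : ℝ) + 1)) := by
      rw [← Real.rpow_natCast, card_M]
      push_cast
      ring_nf
    rw [Real.rpow_neg h1t.le, inv_mul_le_iff₀ (by positivity), ← hpow]
    exact h5
  calc (Fintype.card V : ℝ) * (1 + t) ^ (-(aa + 1)) * Zs F Finset.univ t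
      ≤ (∑ v, (1 + t) ^ (-((F.degree v : ℝ) + 1))) * Zs F Finset.univ t := by
        exact mul_le_mul_of_nonneg_right (jensen_step F ht hn hdeg) (Zs_pos F ht _).le
    _ = ∑ v, (1 + t) ^ (-((F.degree v : ℝ) + 1)) * Zs F Finset.univ t := by
        rw [Finset.sum_mul]
    _ ≤ ∑ v, Zs F (Finset.univ \ M F v) t := Finset.sum_le_sum (fun v _ => hper v)

end Stmt5Aux

open Stmt5Aux in
/-- For a graph `F` on `y` vertices with average degree at most `a > 0` and any `λ > 0`,
`log Z_F(λ) ≥ (y/a)(1 − (1+λ)^(-a))`. -/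
theorem stmt5 {V : Type*} [Fintype V] (F : SimpleGraph V) (a lam : ℝ)
    (ha : 0 < a) (hlam : 0 < lam)
    (hdeg : 2 * (F.edgeSet.ncard : ℝ) / (Fintype.card V : ℝ) ≤ a) :
    Real.log (hcZ F lam) ≥ (Fintype.card V : ℝ) / a * (1 - (1 + lam) ^ (-a)) := by
  classical
  rw [ge_iff_le, hcZ_eq]
  rcases Nat.eq_zero_or_pos (Fintype.card V) with hn | hn
  · rw [hn]
    simp only [Nat.cast_zero, zero_div, zero_mul]
    exact Real.log_nonneg (one_le_Zs F hlam.le _)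
  · have hdeg' : (∑ v, (F.degree v : ℝ)) / (Fintype.card V : ℝ) ≤ a := by
      have h2 : (∑ v, F.degree v) = 2 * F.edgeFinset.card := F.sum_degrees_eq_twice_card_edges
      have h3 : F.edgeSet.ncard = F.edgeFinset.card := by
        rw [← SimpleGraph.coe_edgeFinset, Set.ncard_coe_finset]
      calc (∑ v, (F.degree v : ℝ)) / (Fintype.card V : ℝ)
          = 2 * (F.edgeSet.ncard : ℝ) / (Fintype.card V : ℝ) := by
            rw [h3]
            congr 1
            rw [← Nat.cast_sum, h2]
            push_cast
            ring
        _ ≤ a := hdeg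
    set Zf : ℝ → ℝ := fun t => Zs F Finset.univ t with hZf
    set h : ℝ → ℝ := fun t => Real.log (Zf t) - (Fintype.card V : ℝ) / a * (1 - (1 + t) ^ (-a))
      with hh
    have hZpos : ∀ t : ℝ, 0 ≤ t → 0 < Zf t := fun t htt => Zs_pos F htt _
    set D : ℝ → ℝ := fun t => ∑ v, Zs F (Finset.univ \ M F v) t with hD
    have hder : ∀ t : ℝ, 0 ≤ t → HasDerivAt h
        (D t / Zf t - (Fintype.card V : ℝ) / a * (0 - 1 * (-a) * (1 + t) ^ (-a - 1))) t := by
      intro t htt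
      have h1t : (0:ℝ) < 1 + t := by linarith
      have hd1 : HasDerivAt (fun s => Real.log (Zf s)) (D t / Zf t) t :=
        (Z_hasDerivAt F t).log (hZpos t htt).ne'
      have hinner : HasDerivAt (fun s : ℝ => 1 + s) 1 t := by
        simpa using (hasDerivAt_id t).const_add (1 : ℝ)
      have hd2 : HasDerivAt (fun s : ℝ => (1 + s) ^ (-a)) (1 * (-a) * (1 + t) ^ (-a - 1)) t :=
        hinner.rpow_const (Or.inl h1t.ne')
      exact hd1.sub (((hasDerivAt_const t (1:ℝ)).sub hd2).const_mul _)
    have hmono : MonotoneOn h (Set.Icc 0 lam) := by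
      apply monotoneOn_of_deriv_nonneg (convex_Icc 0 lam)
      · intro t htt
        exact ((hder t htt.1).continuousAt).continuousWithinAt
      · intro t htt
        rw [interior_Icc] at htt
        exact ((hder t htt.1.le).differentiableAt).differentiableWithinAt
      · intro t htt
        rw [interior_Icc] at htt
        have h1t : (0:ℝ) < 1 + t := by linarith [htt.1]
        rw [(hder t htt.1.le).deriv]
        have hkey := deriv_bound F (aa := a) htt.1.le hn hdeg'
        have hZ : 0 < Zf t := hZpos t htt.1.le
        have hsimp : (Fintype.card V : ℝ) / a * (0 - 1 * (-a) * (1 + t) ^ (-a - 1))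
            = (Fintype.card V : ℝ) * (1 + t) ^ (-a - 1) := by
          field_simp
          ring
        rw [hsimp, sub_nonneg, ← show -(a+1) = -a-1 from by ring]
        rw [le_div_iff₀ hZ]
        exact hkey
    have h0 : h 0 = 0 := by
      rw [hh]
      simp only [hZf]
      rw [Zs_zero F, Real.log_one, add_zero, Real.one_rpow]
      ring
    have hfin : h 0 ≤ h lam :=
      hmono (Set.mem_Icc.2 ⟨le_refl 0, hlam.le⟩) (Set.mem_Icc.2 ⟨hlam.le, le_refl lam⟩) hlam.le
    rw [h0, hh] at hfin
    simpa [sub_nonneg] using hfin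
end

section
/- For any graph F on y vertices with average degree at most a ≥ 0 and any λ > 0, log Z_F(λ) ≥ y·log(1+λ)·(1 − (a/2)·log(1+λ)). -/
set_option maxHeartbeats 1000000


open scoped Classical

lemma mem_indepFinset {V : Type*} [Fintype V] {F : SimpleGraph V} {I : Finset V} :
    I ∈ indepFinset F ↔ ∀ u ∈ I, ∀ w ∈ I, ¬ F.Adj u w := by
  simp [indepFinset]

lemma hcZ_deleteEdge {V : Type*} [Fintype V] (F : SimpleGraph V) {u v : V}
    (huv : F.Adj u v) {lam : ℝ} (hlam : 0 < lam) :
    (1 - (lam / (1 + lam)) ^ 2) * hcZ (F.deleteEdges {s(u,v)}) lam ≤ hcZ F lam := by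
  set F' := F.deleteEdges {s(u,v)} with hF'
  have hne : u ≠ v := F.ne_of_adj huv
  have hF'uv : ¬ F'.Adj u v := by simp [hF', SimpleGraph.deleteEdges_adj]
  have hadj' : ∀ a b : V, F'.Adj a b ↔ F.Adj a b ∧ s(a,b) ≠ s(u,v) := by
    intro a b; simp [hF', SimpleGraph.deleteEdges_adj]
  -- the sets J counted by T
  set A : Finset (Finset V) := (indepFinset F').filter
      (fun J => ∀ w ∈ J, w ≠ u ∧ w ≠ v ∧ ¬ F'.Adj u w ∧ ¬ F'.Adj v w) with hA
  set T : ℝ := ∑ J ∈ A, lam ^ J.card with hT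
  have hTnonneg : 0 ≤ T := Finset.sum_nonneg fun J _ => by positivity
  -- F-independent sets are F'-independent
  have hsub : indepFinset F ⊆ indepFinset F' := by
    intro I hI
    rw [mem_indepFinset] at hI ⊢
    intro a ha b hb hab
    exact hI a ha b hb ((hadj' a b).mp hab).1
  -- Claim 1 : hcZ F' = hcZ F + lam^2 * T
  have claim1 : hcZ F' lam = hcZ F lam + lam^2 * T := by
    have hdiff : (indepFinset F') \ (indepFinset F)
        = (indepFinset F').filter (fun I => u ∈ I ∧ v ∈ I) := by
      ext I
      simp only [Finset.mem_sdiff, Finset.mem_filter]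
      constructor
      · rintro ⟨hI', hI⟩
        refine ⟨hI', ?_⟩
        rw [mem_indepFinset] at hI hI'
        push_neg at hI
        obtain ⟨a, ha, b, hb, hab⟩ := hI
        have : ¬ F'.Adj a b := hI' a ha b hb
        rw [hadj'] at this
        have hsab : s(a,b) = s(u,v) := by tauto
        rw [Sym2.eq_iff] at hsab
        rcases hsab with ⟨rfl, rfl⟩ | ⟨rfl, rfl⟩
        · exact ⟨ha, hb⟩
        · exact ⟨hb, ha⟩
      · rintro ⟨hI', hu, hv⟩
        refine ⟨hI', ?_⟩
        rw [mem_indepFinset]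
        push_neg
        exact ⟨u, hu, v, hv, huv⟩
    have hsplit : hcZ F' lam = hcZ F lam
        + ∑ I ∈ (indepFinset F').filter (fun I => u ∈ I ∧ v ∈ I), lam ^ I.card := by
      rw [hcZ, hcZ, ← hdiff, ← Finset.sum_sdiff hsub]
      ring
    rw [hsplit]
    congr 1
    -- bijection I ↦ I \ {u,v}
    rw [hT, Finset.mul_sum]
    refine Finset.sum_nbij' (fun I => I \ {u, v}) (fun J => insert u (insert v J))
      ?hi ?hj ?li ?ri ?he
    case hi =>
      intro I hI
      simp only [Finset.mem_filter, mem_indepFinset] at hI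
      have hI' := hI.1
      have hu := hI.2.1
      have hv := hI.2.2
      rw [hA, Finset.mem_filter, mem_indepFinset]
      constructor
      · intro a ha b hb
        simp only [Finset.mem_sdiff] at ha hb
        exact hI' a ha.1 b hb.1
      · intro w hw
        simp only [Finset.mem_sdiff, Finset.mem_insert, Finset.mem_singleton] at hw
        push_neg at hw
        exact ⟨hw.2.1, hw.2.2, hI' u hu w hw.1, hI' v hv w hw.1⟩
    case hj =>
      intro J hJ
      rw [hA, Finset.mem_filter, mem_indepFinset] at hJ
      obtain ⟨hJ', hcond⟩ := hJ
      rw [Finset.mem_filter, mem_indepFinset]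
      have huJ : u ∉ J := fun h => (hcond u h).1 rfl
      have hvJ : v ∉ J := fun h => (hcond v h).2.1 rfl
      refine ⟨?_, by simp, by simp [hne]⟩
      intro a ha b hb
      simp only [Finset.mem_insert] at ha hb
      rcases ha with rfl | ha
      · rcases hb with rfl | rfl | hb
        · exact fun h => F'.irrefl h
        · exact hF'uv
        · exact (hcond b hb).2.2.1
      · rcases ha with rfl | ha
        · rcases hb with rfl | rfl | hb
          · exact fun h => hF'uv h.symm
          · exact fun h => F'.irrefl h
          · exact (hcond b hb).2.2.2
        · rcases hb with rfl | rfl | hb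
          · exact fun h => (hcond a ha).2.2.1 h.symm
          · exact fun h => (hcond a ha).2.2.2 h.symm
          · exact hJ' a ha b hb
    case li =>
      intro I hI
      simp only [Finset.mem_filter] at hI
      obtain ⟨hu, hv⟩ := hI.2
      ext x
      simp only [Finset.mem_insert, Finset.mem_sdiff, Finset.mem_singleton]
      by_cases hxu : x = u
      · subst hxu; tauto
      by_cases hxv : x = v
      · subst hxv; tauto
      tauto
    case ri =>
      intro J hJ
      rw [hA, Finset.mem_filter] at hJ
      have huJ : u ∉ J := fun h => (hJ.2 u h).1 rfl
      have hvJ : v ∉ J := fun h => (hJ.2 v h).2.1 rfl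
      ext x
      simp only [Finset.mem_insert, Finset.mem_sdiff, Finset.mem_singleton]
      constructor
      · rintro ⟨(rfl | rfl | hx), hne2⟩ <;> tauto
      · intro hx
        refine ⟨Or.inr (Or.inr hx), ?_⟩
        push_neg
        exact ⟨fun h => huJ (h ▸ hx), fun h => hvJ (h ▸ hx)⟩
    case he =>
      intro I hI
      simp only [Finset.mem_filter] at hI
      obtain ⟨hu, hv⟩ := hI.2
      have hss : ({u, v} : Finset V) ⊆ I := by
        intro x hx; simp at hx; rcases hx with rfl | rfl <;> assumption
      have hcard : (I \ {u, v}).card = I.card - 2 := by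
        rw [Finset.card_sdiff_of_subset hss]
        congr 1
        simp [Finset.card_insert_of_notMem, hne]
      have h2 : 2 ≤ I.card := by
        calc 2 = ({u,v} : Finset V).card := by simp [hne]
        _ ≤ I.card := Finset.card_le_card hss
      rw [hcard, ← pow_add]
      congr 1
      omega
  -- Claim 2 : (1+lam)^2 * T <= hcZ F'
  have claim2 : (1 + lam)^2 * T ≤ hcZ F' lam := by
    classical
    set g : Finset V × Finset V → Finset V := fun p => p.1 ∪ p.2 with hg
    set P : Finset (Finset V × Finset V) := A ×ˢ ({u, v} : Finset V).powerset with hP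
    have hmemA : ∀ J ∈ A, u ∉ J ∧ v ∉ J := by
      intro J hJ
      rw [hA, Finset.mem_filter] at hJ
      exact ⟨fun h => (hJ.2 u h).1 rfl, fun h => (hJ.2 v h).2.1 rfl⟩
    have himg : ∀ p ∈ P, g p ∈ indepFinset F' := by
      rintro ⟨J, S⟩ hp
      rw [hP, Finset.mem_product] at hp
      obtain ⟨hJA, hS⟩ := hp
      rw [Finset.mem_powerset] at hS
      rw [hA, Finset.mem_filter, mem_indepFinset] at hJA
      obtain ⟨hJ', hcond⟩ := hJA
      rw [mem_indepFinset]
      intro a ha b hb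
      simp only [hg, Finset.mem_union] at ha hb
      have hcase : ∀ c, c ∈ S → c = u ∨ c = v := fun c hc => by
        have := hS hc; simpa using this
      rcases ha with ha | ha
      · rcases hb with hb | hb
        · exact hJ' a ha b hb
        · rcases hcase b hb with rfl | rfl
          · exact fun h => (hcond a ha).2.2.1 h.symm
          · exact fun h => (hcond a ha).2.2.2 h.symm
      · rcases hb with hb | hb
        · rcases hcase a ha with rfl | rfl
          · exact (hcond b hb).2.2.1
          · exact (hcond b hb).2.2.2
        · rcases hcase a ha with rfl | rfl <;> rcases hcase b hb with rfl | rfl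
          · exact fun h => F'.irrefl h
          · exact hF'uv
          · exact fun h => hF'uv h.symm
          · exact fun h => F'.irrefl h
    have hinj : ∀ p ∈ P, ∀ q ∈ P, g p = g q → p = q := by
      rintro ⟨J₁, S₁⟩ hp ⟨J₂, S₂⟩ hq hpq
      rw [hP, Finset.mem_product, Finset.mem_powerset] at hp hq
      obtain ⟨hu1, hv1⟩ := hmemA J₁ hp.1
      obtain ⟨hu2, hv2⟩ := hmemA J₂ hq.1
      simp only [hg] at hpq
      have hJ : J₁ = J₂ := by
        ext x
        by_cases hxu : x = u
        · subst hxu; simp [hu1, hu2]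
        by_cases hxv : x = v
        · subst hxv; simp [hv1, hv2]
        have hx1 : x ∉ S₁ := fun h => by have := hp.2 h; simp at this; tauto
        have hx2 : x ∉ S₂ := fun h => by have := hq.2 h; simp at this; tauto
        have := Finset.ext_iff.mp hpq x
        simp only [Finset.mem_union] at this
        tauto
      have hS : S₁ = S₂ := by
        ext x
        have hxJ : (x ∈ S₁ → x ∉ J₁) ∧ (x ∈ S₂ → x ∉ J₂) := by
          constructor <;> intro h hxJ
          · have := hp.2 h; simp at this; rcases this with rfl | rfl
            · exact hu1 hxJ
            · exact hv1 hxJ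
          · have := hq.2 h; simp at this; rcases this with rfl | rfl
            · exact hu2 hxJ
            · exact hv2 hxJ
        have := Finset.ext_iff.mp hpq x
        simp only [Finset.mem_union] at this
        subst hJ
        tauto
      rw [hJ, hS]
    have hsum : ∑ p ∈ P, lam ^ (g p).card = (1 + lam)^2 * T := by
      have hcards : ∀ p ∈ P, lam ^ (g p).card = lam ^ p.1.card * lam ^ p.2.card := by
        rintro ⟨J, S⟩ hp
        rw [hP, Finset.mem_product, Finset.mem_powerset] at hp
        obtain ⟨huJ, hvJ⟩ := hmemA J hp.1
        have hdisj : Disjoint J S := by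
          rw [Finset.disjoint_right]
          intro x hx
          have := hp.2 hx; simp at this
          rcases this with rfl | rfl <;> assumption
        simp only [hg]
        rw [Finset.card_union_of_disjoint hdisj, pow_add]
      rw [Finset.sum_congr rfl hcards, hP, Finset.sum_product]
      have hrow : ∀ J : Finset V,
          ∑ S ∈ ({u, v} : Finset V).powerset, lam ^ J.card * lam ^ S.card
            = lam ^ J.card * (1 + lam)^2 := by
        intro J
        rw [← Finset.mul_sum]
        congr 1
        have huv : u ∉ ({v} : Finset V) := by simp [hne]
        rw [show ({u, v} : Finset V) = insert u {v} from rfl, Finset.sum_powerset_insert huv]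
        have hpv : ({v} : Finset V).powerset = {∅, {v}} := by
          ext s; simp [Finset.subset_singleton_iff]
        have hvne : (∅ : Finset V) ∉ ({{v}} : Finset (Finset V)) := by
          simp only [Finset.mem_singleton]
          exact fun h => Finset.singleton_ne_empty v h.symm
        rw [hpv, Finset.sum_insert hvne, Finset.sum_singleton,
          Finset.sum_insert hvne, Finset.sum_singleton]
        have h1 : (insert u (∅ : Finset V)).card = 1 := by simp
        have h2 : (insert u ({v} : Finset V)).card = 2 := by
          rw [Finset.card_insert_of_notMem huv]; simp
        rw [h1, h2]
        simp
        ring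
      rw [Finset.sum_congr rfl (fun J _ => hrow J), ← Finset.sum_mul, ← hT]
      ring
    have himgsum : ∑ I ∈ P.image g, lam ^ I.card = ∑ p ∈ P, lam ^ (g p).card :=
      Finset.sum_image hinj
    calc (1 + lam)^2 * T = ∑ I ∈ P.image g, lam ^ I.card := by rw [himgsum, hsum]
      _ ≤ hcZ F' lam := by
          apply Finset.sum_le_sum_of_subset_of_nonneg
          · intro I hI
            rw [Finset.mem_image] at hI
            obtain ⟨p, hp, rfl⟩ := hI
            exact himg p hp
          · intro I _ _; positivity
  have hq2 : lam^2 * T ≤ (lam / (1 + lam))^2 * hcZ F' lam := by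
    have h1 : (lam / (1 + lam))^2 * ((1 + lam)^2 * T) = lam^2 * T := by
      field_simp
    rw [← h1]
    exact mul_le_mul_of_nonneg_left claim2 (by positivity)
  nlinarith [claim1, hq2]

/-- key analytic lemma -/
lemma log_two_sub_exp_neg (t : ℝ) (ht : 0 ≤ t) :
    t - t^2 ≤ Real.log (2 - Real.exp (-t)) := by
  have key : ∀ x ∈ Set.Ici (0:ℝ),
      (0:ℝ) ≤ Real.log (2 - Real.exp (-x)) - x + x^2 → True := fun _ _ _ => trivial
  set f : ℝ → ℝ := fun x => Real.log (2 - Real.exp (-x)) - x + x^2 with hf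
  have hpos : ∀ x : ℝ, 0 ≤ x → 0 < 2 - Real.exp (-x) := by
    intro x hx
    have : Real.exp (-x) ≤ 1 := Real.exp_le_one_iff.mpr (by linarith)
    linarith
  have hderiv : ∀ x : ℝ, 0 < x → HasDerivAt f
      (Real.exp (-x) / (2 - Real.exp (-x)) - 1 + 2*x) x := by
    intro x hx
    have h1 : HasDerivAt (fun y : ℝ => Real.exp (-y)) (-Real.exp (-x)) x := by
      simpa [Function.comp_def] using (Real.hasDerivAt_exp (-x)).comp x ((hasDerivAt_id x).neg)
    have h2 : HasDerivAt (fun y : ℝ => 2 - Real.exp (-y)) (Real.exp (-x)) x := by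
      simpa using h1.const_sub (2:ℝ)
    have h3 : HasDerivAt (fun y : ℝ => Real.log (2 - Real.exp (-y)))
        (Real.exp (-x) / (2 - Real.exp (-x))) x :=
      h2.log (ne_of_gt (hpos x hx.le))
    have h4 : HasDerivAt (fun y : ℝ => y^2) (2*x) x := by
      simpa using (hasDerivAt_pow 2 x)
    exact (h3.sub (hasDerivAt_id x)).add h4
  have hmono : MonotoneOn f (Set.Ici 0) := by
    apply monotoneOn_of_deriv_nonneg (convex_Ici 0)
    · apply ContinuousOn.add (ContinuousOn.sub ?_ continuousOn_id) (by fun_prop)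
      apply ContinuousOn.log (by fun_prop)
      intro x hx; exact ne_of_gt (hpos x hx)
    · intro x hx
      rw [interior_Ici] at hx
      exact ((hderiv x hx).differentiableAt).differentiableWithinAt
    · intro x hx
      rw [interior_Ici] at hx
      have hx' : 0 < x := hx
      rw [(hderiv x hx').deriv]
      have hs : Real.exp (-x) ≤ 1 := Real.exp_le_one_iff.mpr (by linarith [hx'])
      have hs2 : 1 - Real.exp (-x) ≤ x := by
        nlinarith [Real.add_one_le_exp (-x)]
      have h1 : (1:ℝ) ≤ 2 - Real.exp (-x) := by linarith
      have h2 : Real.exp (-x) / (2 - Real.exp (-x)) - 1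
          = -((2 - 2*Real.exp (-x)) / (2 - Real.exp (-x))) := by
        field_simp
        ring
      rw [h2]
      have h3 : (2 - 2*Real.exp (-x)) / (2 - Real.exp (-x)) ≤ 2 - 2*Real.exp (-x) := by
        apply div_le_self (by nlinarith [Real.exp_pos (-x)]) h1
      nlinarith
  have h0 : f 0 = 0 := by norm_num [hf]
  have := hmono (Set.self_mem_Ici) (Set.mem_Ici.mpr ht) ht
  rw [h0] at this
  simp only [hf] at this
  linarith

lemma hcZ_bot (V : Type*) [Fintype V] (lam : ℝ) :
    hcZ (⊥ : SimpleGraph V) lam = (1 + lam) ^ (Fintype.card V) := by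
  have h1 : indepFinset (⊥ : SimpleGraph V) = (Finset.univ : Finset V).powerset := by
    ext I; simp [mem_indepFinset]
  rw [hcZ, h1]
  calc ∑ I ∈ (Finset.univ : Finset V).powerset, lam ^ I.card
      = ∑ I ∈ (Finset.univ : Finset V).powerset,
          (∏ _i ∈ I, lam) * ∏ _i ∈ Finset.univ \ I, (1:ℝ) := by
        apply Finset.sum_congr rfl; intro I _; simp [Finset.prod_const]
    _ = ∏ _i ∈ (Finset.univ : Finset V), (lam + 1) := (Finset.prod_add _ _ _).symm
    _ = (1 + lam) ^ (Fintype.card V) := by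
        rw [Finset.prod_const, Finset.card_univ, add_comm]

lemma hcZ_lower {V : Type*} [Fintype V] {lam : ℝ} (hlam : 0 < lam) :
    ∀ (m : ℕ) (F : SimpleGraph V), F.edgeFinset.card = m →
      (1 + lam) ^ (Fintype.card V) * (1 - (lam / (1 + lam)) ^ 2) ^ m ≤ hcZ F lam := by
  intro m
  induction m with
  | zero =>
    intro F hF
    have hbot : F = ⊥ := SimpleGraph.edgeFinset_eq_empty.mp (Finset.card_eq_zero.mp hF)
    subst hbot
    rw [hcZ_bot]
    simp
  | succ m ih =>
    intro F hF
    have hnonempty : F.edgeFinset.Nonempty := by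
      rw [← Finset.card_pos, hF]; omega
    obtain ⟨e, he⟩ := hnonempty
    revert he
    refine Sym2.ind (fun u v => ?_) e
    intro he
    have huv : F.Adj u v := by
      rwa [SimpleGraph.mem_edgeFinset, SimpleGraph.mem_edgeSet] at he
    set F' := F.deleteEdges {s(u,v)} with hF'def
    have hEF : F'.edgeFinset = F.edgeFinset.erase s(u,v) := by
      ext e'
      simp only [SimpleGraph.mem_edgeFinset, hF'def, SimpleGraph.edgeSet_deleteEdges,
        Set.mem_diff, Set.mem_singleton_iff, Finset.mem_erase, SimpleGraph.mem_edgeFinset]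
      tauto
    have hcard' : F'.edgeFinset.card = m := by
      rw [hEF, Finset.card_erase_of_mem he, hF]
      omega
    have h2 := ih F' (by convert hcard')
    have hc0 : (0:ℝ) < 1 - (lam / (1 + lam)) ^ 2 := by
      have hq1 : lam / (1 + lam) < 1 := (div_lt_one (by linarith)).mpr (by linarith)
      have hq0 : 0 < lam / (1 + lam) := by positivity
      nlinarith
    have h1 : (1 - (lam / (1 + lam)) ^ 2) * hcZ F' lam ≤ hcZ F lam :=
      hcZ_deleteEdge F huv hlam
    calc (1 + lam) ^ (Fintype.card V) * (1 - (lam / (1 + lam)) ^ 2) ^ (m+1)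
        = (1 - (lam / (1 + lam)) ^ 2)
            * ((1 + lam) ^ (Fintype.card V) * (1 - (lam / (1 + lam)) ^ 2) ^ m) := by ring
      _ ≤ (1 - (lam / (1 + lam)) ^ 2) * hcZ F' lam :=
          mul_le_mul_of_nonneg_left h2 hc0.le
      _ ≤ hcZ F lam := h1

/-- For a graph `F` on `y` vertices with average degree at most `a ≥ 0` and any `λ > 0`,
`log Z_F(λ) ≥ y·log(1+λ)·(1 − (a/2)·log(1+λ))`. -/
theorem stmt6 {V : Type*} [Fintype V] (F : SimpleGraph V) (a lam : ℝ)
    (ha : 0 ≤ a) (hlam : 0 < lam)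
    (hdeg : 2 * (F.edgeSet.ncard : ℝ) / (Fintype.card V : ℝ) ≤ a) :
    Real.log (hcZ F lam)
      ≥ (Fintype.card V : ℝ) * Real.log (1 + lam) * (1 - a / 2 * Real.log (1 + lam)) := by
  set n := Fintype.card V with hn
  set m := F.edgeFinset.card with hm
  set t := Real.log (1 + lam) with htdef
  have h1lam : (0:ℝ) < 1 + lam := by linarith
  have ht0 : 0 < t := Real.log_pos (by linarith)
  -- edge count bound : 2m ≤ a*n
  have hmn : 2 * (m:ℝ) ≤ a * n := by
    have hncard : (F.edgeSet.ncard : ℝ) = (m:ℝ) := by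
      rw [hm, ← SimpleGraph.coe_edgeFinset, Set.ncard_coe_finset]
    by_cases hn0 : n = 0
    · have hVempty : IsEmpty V := Fintype.card_eq_zero_iff.mp hn0
      have hm0 : F.edgeFinset = ∅ := by
        ext e'
        refine Sym2.ind (fun x y => ?_) e'
        exact (IsEmpty.false x).elim
      rw [hm, hm0, hn0]
      simp
    · have hnpos : (0:ℝ) < n := by
        have : 0 < n := Nat.pos_of_ne_zero hn0
        exact_mod_cast this
      rw [div_le_iff₀ hnpos] at hdeg
      rw [hncard] at hdeg
      linarith
  have hc0 : (0:ℝ) < 1 - (lam / (1 + lam)) ^ 2 := by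
    have hq1 : lam / (1 + lam) < 1 := (div_lt_one (by linarith)).mpr (by linarith)
    have hq0 : 0 < lam / (1 + lam) := by positivity
    nlinarith
  have hZlb := hcZ_lower hlam m F rfl
  have hlhs_pos : (0:ℝ) < (1 + lam) ^ n * (1 - (lam / (1 + lam)) ^ 2) ^ m := by positivity
  have hZpos : 0 < hcZ F lam := lt_of_lt_of_le hlhs_pos hZlb
  have hlog1 : Real.log ((1 + lam) ^ n * (1 - (lam / (1 + lam)) ^ 2) ^ m)
      ≤ Real.log (hcZ F lam) := Real.log_le_log hlhs_pos hZlb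
  have hlog2 : Real.log ((1 + lam) ^ n * (1 - (lam / (1 + lam)) ^ 2) ^ m)
      = n * t + m * Real.log (1 - (lam / (1 + lam)) ^ 2) := by
    rw [Real.log_mul (by positivity) (by positivity), Real.log_pow, Real.log_pow, htdef]
  -- analytic bound : log(1 - q^2) ≥ -t^2
  have hexp : Real.exp (-t) = 1 / (1 + lam) := by
    rw [htdef, Real.exp_neg, Real.exp_log h1lam]
    simp [one_div]
  have hcval : 1 - (lam / (1 + lam)) ^ 2 = (2 - Real.exp (-t)) / (1 + lam) := by
    rw [hexp]
    field_simp
    ring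
  have hnum_pos : (0:ℝ) < 2 - Real.exp (-t) := by
    rw [hexp]
    have : 1 / (1 + lam) < 1 := by
      rw [div_lt_one h1lam]; linarith
    linarith
  have hlogc : -(t^2) ≤ Real.log (1 - (lam / (1 + lam)) ^ 2) := by
    rw [hcval, Real.log_div (ne_of_gt hnum_pos) (ne_of_gt h1lam), ← htdef]
    have := log_two_sub_exp_neg t ht0.le
    linarith
  -- put it together
  have hmR : (0:ℝ) ≤ (m:ℝ) := Nat.cast_nonneg m
  have hnR : (0:ℝ) ≤ (n:ℝ) := Nat.cast_nonneg n
  have key : (n:ℝ) * t + m * Real.log (1 - (lam / (1 + lam)) ^ 2)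
      ≥ (n:ℝ) * t * (1 - a / 2 * t) := by
    have h3 : (m:ℝ) * (-(t^2)) ≤ m * Real.log (1 - (lam / (1 + lam)) ^ 2) :=
      mul_le_mul_of_nonneg_left hlogc hmR
    nlinarith [sq_nonneg t, mul_le_mul_of_nonneg_right hmn (sq_nonneg t)]
  calc Real.log (hcZ F lam) ≥ n * t + m * Real.log (1 - (lam / (1 + lam)) ^ 2) := by
        rw [← hlog2]; exact hlog1
    _ ≥ (n:ℝ) * t * (1 - a / 2 * t) := key
end

section
/- For every vertex u of a graph G in which each induced subgraph of each neighbourhood G[N(u)] has average degree at most a, and for the β, γ defined via the Lambert W optimization, the hard-core model on G at fugacity λ has strong local (β,γ)-occupancy with β + γd = ((1+λ)/λ)·(d(1+λ)^a log(1+λ))/W(d(1+λ)^a log(1+λ)). -/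
open scoped Classical

section AuxOcc
variable {W : Type*} [Fintype W] (F : SimpleGraph W) {lam : ℝ}

lemma empty_mem_indep : ∅ ∈ indepFinset F := by simp [indepFinset]

lemma hcZ_pos (h : 0 < lam) : 0 < hcZ F lam :=
  Finset.sum_pos (fun I _ => pow_pos h _) ⟨∅, empty_mem_indep F⟩

lemma sum_powerset (s : Finset W) (x : ℝ) :
    ∑ t ∈ s.powerset, x ^ t.card = (1 + x) ^ s.card := by
  have := Finset.prod_add (fun _ : W => x) (fun _ => (1:ℝ)) s
  simp only [Finset.prod_const, one_pow, mul_one] at this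
  rw [add_comm 1 x, this]

lemma hcZ_le (h : 0 ≤ lam) : hcZ F lam ≤ (1 + lam) ^ Fintype.card W := by
  rw [← Finset.card_univ, ← sum_powerset Finset.univ lam]
  refine Finset.sum_le_sum_of_subset_of_nonneg ?_ fun _ _ _ => pow_nonneg h _
  intro I _; simp [Finset.mem_powerset]

lemma hcZ_hasDeriv (x : ℝ) :
    HasDerivAt (hcZ F) (∑ I ∈ indepFinset F, I.card * x ^ (I.card - 1)) x :=
  HasDerivAt.fun_sum fun I _ => hasDerivAt_pow I.card x

lemma mul_deriv_hcZ (h : lam ≠ 0) :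
    lam * deriv (hcZ F) lam = ∑ I ∈ indepFinset F, (I.card : ℝ) * lam ^ I.card := by
  rw [(hcZ_hasDeriv F lam).deriv, Finset.mul_sum]
  refine Finset.sum_congr rfl fun I _ => ?_
  rcases Nat.eq_zero_or_pos I.card with h0 | h0
  · simp [h0]
  · rw [← mul_assoc, mul_comm lam, mul_assoc, ← pow_succ', Nat.sub_add_cancel h0]

lemma sum_swap_occ :
    ∑ I ∈ indepFinset F, (I.card : ℝ) * lam ^ I.card
      = ∑ v : W, ∑ I ∈ (indepFinset F).filter (fun I => v ∈ I), lam ^ I.card := by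
  simp_rw [Finset.sum_filter]
  rw [Finset.sum_comm]
  refine Finset.sum_congr rfl fun I _ => ?_
  rw [Finset.sum_ite_mem, Finset.univ_inter, Finset.sum_const, nsmul_eq_mul]

lemma key_vertex (hl : 0 < lam) (v : W) :
    lam * hcZ F lam ≤ (1 + lam) ^ (F.degree v + 1)
      * ∑ J ∈ (indepFinset F).filter (fun J => v ∈ J), lam ^ J.card := by
  classical
  set Nv : Finset W := insert v (F.neighborFinset v) with hNv
  have hvN : v ∈ Nv := Finset.mem_insert_self _ _
  have hcard : Nv.card = F.degree v + 1 := by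
    rw [hNv, Finset.card_insert_of_notMem (by simp), F.card_neighborFinset_eq_degree]
  have hmem : ∀ I ∈ indepFinset F,
      (fun I => (I ∩ Nv, insert v (I \ Nv))) I
        ∈ Nv.powerset ×ˢ (indepFinset F).filter (fun J => v ∈ J) := by
    intro I hI
    simp only [indepFinset, Finset.mem_filter, Finset.mem_univ, true_and] at hI
    simp only [Finset.mem_product, Finset.mem_powerset, Finset.mem_filter,
      Finset.inter_subset_right, true_and, indepFinset, Finset.mem_univ,
      Finset.mem_insert_self, and_true]
    intro x hx y hy
    rcases Finset.mem_insert.1 hx with rfl | hx <;> rcases Finset.mem_insert.1 hy with rfl | hy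
    · exact F.irrefl
    · have := (Finset.mem_sdiff.1 hy).2
      intro hadj
      exact this (Finset.mem_insert_of_mem (by rwa [SimpleGraph.mem_neighborFinset]))
    · have := (Finset.mem_sdiff.1 hx).2
      intro hadj
      exact this (Finset.mem_insert_of_mem
        (by rw [SimpleGraph.mem_neighborFinset]; exact hadj.symm))
    · exact hI x (Finset.mem_sdiff.1 hx).1 y (Finset.mem_sdiff.1 hy).1
  have hinj : ∀ I ∈ indepFinset F, ∀ I' ∈ indepFinset F,
      (fun I => (I ∩ Nv, insert v (I \ Nv))) I = (fun I => (I ∩ Nv, insert v (I \ Nv))) I'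
        → I = I' := by
    intro I _ I' _ h
    have h1 : I ∩ Nv = I' ∩ Nv := congrArg Prod.fst h
    have h2 : insert v (I \ Nv) = insert v (I' \ Nv) := congrArg Prod.snd h
    have hv1 : v ∉ I \ Nv := fun hc => (Finset.mem_sdiff.1 hc).2 hvN
    have hv2 : v ∉ I' \ Nv := fun hc => (Finset.mem_sdiff.1 hc).2 hvN
    have h3 : I \ Nv = I' \ Nv := by
      rw [← Finset.erase_insert hv1, ← Finset.erase_insert hv2, h2]
    ext x
    constructor <;> intro hx
    · by_cases hxN : x ∈ Nv
      · exact (Finset.mem_inter.1 (h1 ▸ Finset.mem_inter.2 ⟨hx, hxN⟩)).1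
      · exact (Finset.mem_sdiff.1 (h3 ▸ Finset.mem_sdiff.2 ⟨hx, hxN⟩)).1
    · by_cases hxN : x ∈ Nv
      · exact (Finset.mem_inter.1 (h1 ▸ Finset.mem_inter.2 ⟨hx, hxN⟩)).1
      · exact (Finset.mem_sdiff.1 (h3 ▸ Finset.mem_sdiff.2 ⟨hx, hxN⟩)).1
  calc lam * hcZ F lam
      = ∑ I ∈ indepFinset F,
          (fun p : Finset W × Finset W => lam ^ p.1.card * lam ^ p.2.card)
            ((fun I => (I ∩ Nv, insert v (I \ Nv))) I) := by
        rw [hcZ, Finset.mul_sum]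
        refine Finset.sum_congr rfl fun I _ => ?_
        have hv1 : v ∉ I \ Nv := fun hc => (Finset.mem_sdiff.1 hc).2 hvN
        simp only [Finset.card_insert_of_notMem hv1]
        conv_lhs => rw [← Finset.card_inter_add_card_sdiff I Nv]
        ring
    _ = ∑ p ∈ (indepFinset F).image (fun I => (I ∩ Nv, insert v (I \ Nv))),
          lam ^ p.1.card * lam ^ p.2.card := by
        rw [Finset.sum_image hinj]
    _ ≤ ∑ p ∈ Nv.powerset ×ˢ (indepFinset F).filter (fun J => v ∈ J),
          lam ^ p.1.card * lam ^ p.2.card := by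
        refine Finset.sum_le_sum_of_subset_of_nonneg ?_
          (fun _ _ _ => mul_nonneg (pow_nonneg hl.le _) (pow_nonneg hl.le _))
        intro p hp
        obtain ⟨I, hI, rfl⟩ := Finset.mem_image.1 hp
        exact hmem I hI
    _ = (1 + lam) ^ (F.degree v + 1)
          * ∑ J ∈ (indepFinset F).filter (fun J => v ∈ J), lam ^ J.card := by
        rw [← hcard, ← sum_powerset Nv lam, Finset.sum_mul_sum]
        exact Finset.sum_product _ _ (fun p : Finset W × Finset W => lam ^ p.1.card * lam ^ p.2.card)

lemma lam_deriv_ge (a : ℝ) (hl : 0 < lam)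
    (hdeg0 : (∑ v, (Nat.card (F.neighborSet v) : ℝ)) ≤ a * Fintype.card W) :
    (Fintype.card W : ℝ) * (lam / (1 + lam)) * Real.exp (-(a * Real.log (1 + lam)))
        * hcZ F lam ≤ lam * deriv (hcZ F) lam := by
  have h1l : (0:ℝ) < 1 + lam := by linarith
  set L := Real.log (1 + lam) with hLdef
  have hL : 0 < L := Real.log_pos (by linarith)
  have hexp : Real.exp L = 1 + lam := Real.exp_log h1l
  have hZ := hcZ_pos F hl
  have hdeg : (∑ v, (F.degree v : ℝ)) ≤ a * Fintype.card W := by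
    have h : ∀ v : W, ((Nat.card (F.neighborSet v) : ℝ)) = (F.degree v : ℝ) := fun v => by
      rw [Nat.card_eq_fintype_card, SimpleGraph.card_neighborSet_eq_degree]
    rwa [Finset.sum_congr rfl fun v _ => h v] at hdeg0
  rw [mul_deriv_hcZ F hl.ne', sum_swap_occ]
  have step1 : ∀ v : W, (lam / (1 + lam)) * Real.exp (-((F.degree v : ℝ) * L)) * hcZ F lam
      ≤ ∑ I ∈ (indepFinset F).filter (fun I => v ∈ I), lam ^ I.card := by
    intro v
    have hk := key_vertex F hl v
    have hC : ((1 + lam) : ℝ) ^ (F.degree v + 1)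
        = (1 + lam) * Real.exp ((F.degree v : ℝ) * L) := by
      rw [← hexp, ← Real.exp_nat_mul]
      rw [← Real.exp_add]
      congr 1
      push_cast
      ring
    rw [hC] at hk
    have hErw : (lam / (1 + lam)) * Real.exp (-((F.degree v : ℝ) * L)) * hcZ F lam
        = lam * hcZ F lam / ((1 + lam) * Real.exp ((F.degree v : ℝ) * L)) := by
      rw [Real.exp_neg]
      field_simp
    rw [hErw, div_le_iff₀ (by positivity)]
    exact hk.trans_eq (mul_comm _ _)
  calc (Fintype.card W : ℝ) * (lam / (1 + lam)) * Real.exp (-(a * L)) * hcZ F lam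
      ≤ ∑ v : W, (lam / (1 + lam)) * Real.exp (-((F.degree v : ℝ) * L)) * hcZ F lam := by
        have tangent : ∀ v : W,
            Real.exp (-(a * L)) * (1 + (a * L - (F.degree v : ℝ) * L))
              ≤ Real.exp (-((F.degree v : ℝ) * L)) := by
          intro v
          calc Real.exp (-(a * L)) * (1 + (a * L - (F.degree v : ℝ) * L))
              ≤ Real.exp (-(a * L)) * Real.exp (a * L - (F.degree v : ℝ) * L) := by
                have := Real.add_one_le_exp (a * L - (F.degree v : ℝ) * L)
                exact mul_le_mul_of_nonneg_left (by linarith) (Real.exp_nonneg _)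
            _ = Real.exp (-((F.degree v : ℝ) * L)) := by
                rw [← Real.exp_add]; ring_nf
        have hsum : (Fintype.card W : ℝ) * Real.exp (-(a * L))
            ≤ ∑ v : W, Real.exp (-((F.degree v : ℝ) * L)) := by
          have h2 : ∑ v : W, Real.exp (-(a * L)) * (1 + (a * L - (F.degree v : ℝ) * L))
              ≤ ∑ v : W, Real.exp (-((F.degree v : ℝ) * L)) :=
            Finset.sum_le_sum fun v _ => tangent v
          refine le_trans ?_ h2
          rw [← Finset.mul_sum]
          have h3 : (Fintype.card W : ℝ)
              ≤ ∑ v : W, (1 + (a * L - (F.degree v : ℝ) * L)) := by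
            have h4 : ∑ v : W, (1 + (a * L - (F.degree v : ℝ) * L))
                = (Fintype.card W : ℝ) * (1 + a * L) - L * ∑ v, (F.degree v : ℝ) := by
              rw [Finset.sum_add_distrib, Finset.sum_sub_distrib, Finset.sum_const,
                Finset.card_univ, nsmul_eq_mul, mul_one, Finset.sum_const, Finset.card_univ,
                nsmul_eq_mul, ← Finset.sum_mul]
              ring
            rw [h4]
            have h5 : L * ∑ v, (F.degree v : ℝ) ≤ L * (a * Fintype.card W) :=
              mul_le_mul_of_nonneg_left hdeg hL.le
            nlinarith
          calc (Fintype.card W : ℝ) * Real.exp (-(a * L))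
              = Real.exp (-(a * L)) * (Fintype.card W : ℝ) := by ring
            _ ≤ Real.exp (-(a * L)) * ∑ v : W, (1 + (a * L - (F.degree v : ℝ) * L)) :=
                mul_le_mul_of_nonneg_left h3 (Real.exp_nonneg _)
        calc (Fintype.card W : ℝ) * (lam / (1 + lam)) * Real.exp (-(a * L)) * hcZ F lam
            = ((Fintype.card W : ℝ) * Real.exp (-(a * L))) * ((lam / (1 + lam)) * hcZ F lam) := by
              ring
          _ ≤ (∑ v : W, Real.exp (-((F.degree v : ℝ) * L))) * ((lam / (1 + lam)) * hcZ F lam) := by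
              refine mul_le_mul_of_nonneg_right hsum ?_
              positivity
          _ = ∑ v : W, (lam / (1 + lam)) * Real.exp (-((F.degree v : ℝ) * L)) * hcZ F lam := by
              rw [Finset.sum_mul]
              refine Finset.sum_congr rfl fun v _ => by ring
    _ ≤ ∑ v : W, ∑ I ∈ (indepFinset F).filter (fun I => v ∈ I), lam ^ I.card :=
        Finset.sum_le_sum fun v _ => step1 v

lemma handshake' : ∑ v, Nat.card (F.neighborSet v) = 2 * F.edgeSet.ncard := by
  have h : ∀ v : W, Nat.card (F.neighborSet v) = F.degree v := fun v => by
    rw [Nat.card_eq_fintype_card, SimpleGraph.card_neighborSet_eq_degree]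
  rw [Finset.sum_congr rfl fun v _ => h v]
  rw [SimpleGraph.sum_degrees_eq_twice_card_edges, SimpleGraph.edgeFinset_card,
    ← Nat.card_eq_fintype_card, Nat.card_coe_set_eq]

lemma coe_edge_ncard {V : Type*} [Fintype V] {G : SimpleGraph V} (H' : G.Subgraph) :
    H'.coe.edgeSet.ncard = H'.edgeSet.ncard := by
  rw [← SimpleGraph.Subgraph.image_coe_edgeSet_coe,
    Set.ncard_image_of_injective _ (Sym2.map.injective Subtype.val_injective)]

lemma verts_card_eq {V : Type*} [Fintype V] {G : SimpleGraph V} (H' : G.Subgraph) :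
    H'.verts.ncard = Fintype.card ↥H'.verts := by
  rw [← Nat.card_coe_set_eq, Nat.card_eq_fintype_card]
end AuxOcc

/-- The hard-core model on `G` at fugacity `λ` has strong local `(β,γ)`-occupancy:
for every vertex `u` and every subgraph `F` of `G[N(u)]`,
`β·(λ/(1+λ))·(1/Z_F(λ)) + γ·(λ Z_F'(λ)/Z_F(λ)) ≥ 1`. -/
def StrongLocalOcc {V : Type*} [Fintype V] (G : SimpleGraph V) (lam β γ : ℝ) : Prop :=
  ∀ (u : V) (H' : G.Subgraph), H'.verts ⊆ G.neighborSet u →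
    β * (lam / (1 + lam)) * (1 / hcZ H'.coe lam)
      + γ * (lam * deriv (hcZ H'.coe) lam / hcZ H'.coe lam) ≥ 1


set_option maxHeartbeats 1000000 in
/-- If every subgraph of every neighbourhood `G[N(u)]` has average degree at most `a`,
then with `β, γ` defined via the Lambert-W optimization (where `w = W(D)`,
`D = d(1+λ)^a log(1+λ)`), the hard-core model on `G` at fugacity `λ` has strong local
`(β,γ)`-occupancy, and `β + γd = ((1+λ)/λ)·D/W(D)`. -/
theorem stmt14 {V : Type*} [Fintype V] (G : SimpleGraph V) (a d lam w : ℝ)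
    (ha : 0 ≤ a) (hd : 0 < d) (hlam : 0 < lam) (hw0 : 0 ≤ w)
    (hw : w * Real.exp w = d * (1 + lam) ^ a * Real.log (1 + lam))
    (hmad : ∀ (u : V) (H' : G.Subgraph), H'.verts ⊆ G.neighborSet u →
      H'.verts.Nonempty → 2 * (H'.edgeSet.ncard : ℝ) / (H'.verts.ncard : ℝ) ≤ a) :
    StrongLocalOcc G lam
        ((1 + lam) / lam * (d * (1 + lam) ^ a * Real.log (1 + lam)) / (w * (1 + w)))
        ((1 + lam) / lam * ((1 + lam) ^ a * Real.log (1 + lam)) / (1 + w))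
    ∧ (1 + lam) / lam * (d * (1 + lam) ^ a * Real.log (1 + lam)) / (w * (1 + w))
        + (1 + lam) / lam * ((1 + lam) ^ a * Real.log (1 + lam)) / (1 + w) * d
      = (1 + lam) / lam * (d * (1 + lam) ^ a * Real.log (1 + lam)) / w := by
  have h1l : (0:ℝ) < 1 + lam := by linarith
  set L := Real.log (1 + lam) with hLdef
  have hL : 0 < L := Real.log_pos (by linarith)
  have hA : (1 + lam) ^ a = Real.exp (a * L) := by
    rw [Real.rpow_def_of_pos h1l, mul_comm]
  have hrpow : (0:ℝ) < (1 + lam) ^ a := Real.rpow_pos_of_pos h1l a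
  have hD : 0 < d * (1 + lam) ^ a * L := by positivity
  have hwpos : 0 < w := by
    rcases hw0.lt_or_eq with h | h
    · exact h
    · exfalso; rw [← h, zero_mul] at hw; linarith
  have h1w : (0:ℝ) < 1 + w := by linarith
  constructor
  · intro u H' hsub
    set n : ℕ := Fintype.card ↥H'.verts with hn
    set Z := hcZ H'.coe lam with hZ
    have hZpos : 0 < Z := hcZ_pos _ hlam
    -- degree sum bound
    have hdeg : (∑ v, (Nat.card (H'.coe.neighborSet v) : ℝ)) ≤ a * n := by
      have hhs : ∑ v, Nat.card (H'.coe.neighborSet v) = 2 * H'.edgeSet.ncard := by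
        rw [handshake', coe_edge_ncard]
      rcases H'.verts.eq_empty_or_nonempty with hemp | hne
      · have hzero : n = 0 := by
          rw [hn, ← verts_card_eq, hemp]; simp
        have hie : IsEmpty ↥H'.verts := by rw [hemp]; exact Set.isEmpty_coe_sort.2 rfl
        rw [Finset.univ_eq_empty]
        simp [hzero]
      · have hmad' := hmad u H' hsub hne
        have hnc : (0:ℝ) < (H'.verts.ncard : ℝ) := by
          have := Set.ncard_pos (H'.verts.toFinite) |>.2 hne
          exact_mod_cast this
        rw [div_le_iff₀ hnc] at hmad'
        have hcast : (∑ v, (Nat.card (H'.coe.neighborSet v) : ℝ)) = 2 * (H'.edgeSet.ncard : ℝ) := by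
          rw [← Nat.cast_sum]
          exact_mod_cast congrArg (Nat.cast : ℕ → ℝ) hhs
        rw [hcast]
        rw [hn, ← verts_card_eq]
        exact hmad'
    have hderiv := lam_deriv_ge H'.coe a hlam hdeg
    -- Z upper bound
    have hZle : Z ≤ Real.exp (n * L) := by
      have h := hcZ_le H'.coe hlam.le
      rw [← Real.exp_log h1l, ← Real.exp_nat_mul] at h
      rw [← hLdef] at h
      exact h
    -- coefficient identities
    have hβ1 : (1 + lam) / lam * (d * (1 + lam) ^ a * L) / (w * (1 + w)) * (lam / (1 + lam))
        = Real.exp w / (1 + w) := by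
      rw [← hw]
      field_simp
    have hγ1 : (1 + lam) / lam * ((1 + lam) ^ a * L) / (1 + w) * (lam / (1 + lam))
          * Real.exp (-(a * L)) = L / (1 + w) := by
      rw [hA, Real.exp_neg]
      have hne := Real.exp_ne_zero (a * L)
      field_simp
    have hγ0 : 0 ≤ (1 + lam) / lam * ((1 + lam) ^ a * L) / (1 + w) :=
      le_of_lt (div_pos (mul_pos (div_pos h1l hlam) (mul_pos hrpow hL)) h1w)
    -- combine
    have hinv : Real.exp (-(n * L)) ≤ 1 / Z := by
      rw [Real.exp_neg, ← one_div]
      exact one_div_le_one_div_of_le hZpos hZle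
    have h2' : (n:ℝ) * (lam / (1 + lam)) * Real.exp (-(a * L)) ≤
        lam * deriv (hcZ H'.coe) lam / Z := by
      rw [le_div_iff₀ hZpos]
      exact hderiv
    have hexpw : 0 < Real.exp w / (1 + w) := by positivity
    have t1 : Real.exp w / (1 + w) * Real.exp (-(n * L))
        ≤ (1 + lam) / lam * (d * (1 + lam) ^ a * L) / (w * (1 + w)) * (lam / (1 + lam))
          * (1 / Z) := by
      rw [hβ1]
      exact mul_le_mul_of_nonneg_left hinv hexpw.le
    have t2 : (n:ℝ) * (L / (1 + w))
        ≤ (1 + lam) / lam * ((1 + lam) ^ a * L) / (1 + w)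
          * (lam * deriv (hcZ H'.coe) lam / Z) := by
      calc (n:ℝ) * (L / (1 + w))
          = (1 + lam) / lam * ((1 + lam) ^ a * L) / (1 + w)
            * ((n:ℝ) * (lam / (1 + lam)) * Real.exp (-(a * L))) := by
            rw [show (1 + lam) / lam * ((1 + lam) ^ a * L) / (1 + w)
                * ((n:ℝ) * (lam / (1 + lam)) * Real.exp (-(a * L)))
                = (n:ℝ) * ((1 + lam) / lam * ((1 + lam) ^ a * L) / (1 + w) * (lam / (1 + lam))
                  * Real.exp (-(a * L))) from by ring, hγ1]
        _ ≤ _ := mul_le_mul_of_nonneg_left h2' hγ0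
    have hkey := Real.add_one_le_exp (w - (n:ℝ) * L)
    have hcomb : Real.exp w * Real.exp (-((n:ℝ) * L)) = Real.exp (w - (n:ℝ) * L) := by
      rw [← Real.exp_add]; ring_nf
    have t3 : 1 ≤ Real.exp w / (1 + w) * Real.exp (-((n:ℝ) * L)) + (n:ℝ) * (L / (1 + w)) := by
      have heq : Real.exp w / (1 + w) * Real.exp (-((n:ℝ) * L)) + (n:ℝ) * (L / (1 + w))
          = (Real.exp (w - (n:ℝ) * L) + (n:ℝ) * L) / (1 + w) := by
        rw [← hcomb]; field_simp
      rw [heq, le_div_iff₀ h1w]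
      linarith
    linarith [t1, t2, t3]
  · have hlam' : lam ≠ 0 := hlam.ne'
    have hw' : w ≠ 0 := hwpos.ne'
    have h1w' : (1 + w) ≠ 0 := h1w.ne'
    have h1l' : (1 + lam) ≠ 0 := h1l.ne'
    generalize (1 + lam) ^ a = P
    field_simp
end

section
/- Chernoff bound for negatively correlated indicators: if X_1,…,X_n are {0,1}-valued random variables such that Y_i = 1 − X_i are negatively correlated, then for X = Σ X_i and any η ∈ (0,1), P(X ≤ (1−η)·E X) ≤ exp(−η² E X / 2). -/
open MeasureTheory

lemma key_log_ineq {x : ℝ} (hx0 : 0 < x) (hx1 : x < 1) :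
    x ^ 2 / 2 ≤ (1 - x) * Real.log (1 - x) + x := by
  set y := 1 - x with hy
  have hy0 : 0 < y := by linarith
  have hy1 : y ≤ 1 := by linarith
  have hs : 0 ≤ -Real.log y := by
    rw [neg_nonneg]; exact Real.log_nonpos hy0.le hy1
  have hsinh := Real.self_le_sinh_iff.mpr hs
  rw [Real.sinh_eq, Real.exp_neg, neg_neg, Real.exp_log hy0] at hsinh
  have hinv : y * y⁻¹ = 1 := mul_inv_cancel₀ hy0.ne'
  have hlog : (y - y⁻¹) / 2 ≤ Real.log y := by linarith
  have hmul := mul_le_mul_of_nonneg_left hlog hy0.le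
  nlinarith [hmul, hinv]

/-- Chernoff-type bound of Panconesi and Srinivasan: if `X_1, …, X_n` are `{0,1}`-valued
random variables such that the `Y_i = 1 - X_i` are negatively correlated, then for
`X = Σ X_i` and any `η ∈ (0,1)`, `P(X ≤ (1-η)·E X) ≤ exp(-η² E X / 2)`. -/
theorem stmt15 {Ω : Type*} [MeasurableSpace Ω] (μ : Measure Ω)
    [IsProbabilityMeasure μ] (n : ℕ) (X : Fin n → Ω → ℝ)
    (hX01 : ∀ i ω, X i ω = 0 ∨ X i ω = 1) (hXm : ∀ i, Measurable (X i))
    (hneg : ∀ S : Finset (Fin n),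
      (μ {ω | ∀ i ∈ S, X i ω = 0}).toReal ≤ ∏ i ∈ S, (μ {ω | X i ω = 0}).toReal)
    (η : ℝ) (hη : η ∈ Set.Ioo (0 : ℝ) 1) :
    (μ {ω | ∑ i, X i ω ≤ (1 - η) * ∫ ω', (∑ i, X i ω') ∂μ}).toReal
      ≤ Real.exp (-η ^ 2 * (∫ ω', (∑ i, X i ω') ∂μ) / 2) := by
  obtain ⟨hη0, hη1⟩ := hη
  have h1η : 0 < 1 - η := by linarith
  set t := Real.log (1 - η) with ht
  have het : Real.exp t = 1 - η := Real.exp_log h1η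
  have ht0 : t ≤ 0 := Real.log_nonpos (by linarith) (by linarith)
  -- measurability of the joint-zero sets
  have hA : ∀ S : Finset (Fin n), MeasurableSet {ω | ∀ i ∈ S, X i ω = 0} := by
    intro S
    have : {ω | ∀ i ∈ S, X i ω = 0} = ⋂ i ∈ S, (X i) ⁻¹' {0} := by
      ext ω; simp
    rw [this]
    exact MeasurableSet.biInter S.countable_toSet
      (fun i _ => (hXm i) (measurableSet_singleton 0))
  -- products of (1 - X i) are indicators
  have hprod_ind : ∀ (S : Finset (Fin n)) ω,
      (∏ i ∈ S, (1 - X i ω))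
        = Set.indicator {ω | ∀ i ∈ S, X i ω = 0} (fun _ => (1:ℝ)) ω := by
    intro S ω
    by_cases h : ∀ i ∈ S, X i ω = 0
    · rw [Set.indicator_of_mem (Set.mem_setOf.mpr h)]
      exact Finset.prod_eq_one fun i hi => by rw [h i hi]; ring
    · rw [Set.indicator_of_notMem (by exact h)]
      push_neg at h
      obtain ⟨i, hiS, hi⟩ := h
      have hx1 : X i ω = 1 := (hX01 i ω).resolve_left hi
      exact Finset.prod_eq_zero hiS (by rw [hx1]; ring)
  have hInt_prod : ∀ S : Finset (Fin n),
      Integrable (fun ω => ∏ i ∈ S, (1 - X i ω)) μ := by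
    intro S
    have h : (fun ω => ∏ i ∈ S, (1 - X i ω))
        = Set.indicator {ω | ∀ i ∈ S, X i ω = 0} (fun _ => (1:ℝ)) :=
      funext (hprod_ind S)
    rw [h]
    exact (integrable_const 1).indicator (hA S)
  have hint_prod : ∀ S : Finset (Fin n),
      ∫ ω, (∏ i ∈ S, (1 - X i ω)) ∂μ = (μ {ω | ∀ i ∈ S, X i ω = 0}).toReal := by
    intro S
    simp_rw [hprod_ind S]
    rw [integral_indicator_const (1:ℝ) (hA S)]
    simp
    rfl
  have hIntY : ∀ i, Integrable (fun ω => 1 - X i ω) μ := by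
    intro i
    simpa using hInt_prod {i}
  have hIntX : ∀ i, Integrable (X i) μ := by
    intro i
    have h : X i = fun ω => 1 - (1 - X i ω) := by funext ω; ring
    rw [h]; exact (integrable_const 1).sub (hIntY i)
  set q : Fin n → ℝ := fun i => (μ {ω | X i ω = 0}).toReal with hqdef
  have hq_eq : ∀ i, ∫ ω, (1 - X i ω) ∂μ = q i := by
    intro i
    simpa using hint_prod {i}
  have hq0 : ∀ i, 0 ≤ q i := fun i => ENNReal.toReal_nonneg
  have hq1 : ∀ i, q i ≤ 1 := by
    intro i
    have h := measure_mono (μ := μ) (Set.subset_univ {ω | X i ω = 0})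
    calc q i ≤ (μ Set.univ).toReal := ENNReal.toReal_mono (measure_ne_top μ _) h
      _ = 1 := by simp
  have hEX : ∀ i, ∫ ω, X i ω ∂μ = 1 - q i := by
    intro i
    have h1 : ∫ ω, X i ω ∂μ = ∫ ω, ((1:ℝ) - (1 - X i ω)) ∂μ := by
      congr 1; funext ω; ring
    rw [h1, integral_sub (integrable_const 1) (hIntY i), hq_eq i]
    simp
  set m := ∫ ω', (∑ i, X i ω') ∂μ with hm
  have hm_eq : m = ∑ i, (1 - q i) := by
    rw [hm, integral_finset_sum _ (fun i _ => hIntX i)]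
    exact Finset.sum_congr rfl fun i _ => hEX i
  have hm0 : 0 ≤ m := by
    rw [hm_eq]
    exact Finset.sum_nonneg fun i _ => by have := hq1 i; linarith
  -- pointwise exponential identity
  have hexp_eq : ∀ ω, Real.exp (t * ∑ i, X i ω)
      = ∏ i, (η * (1 - X i ω) + (1 - η)) := by
    intro ω
    rw [Finset.mul_sum, Real.exp_sum]
    refine Finset.prod_congr rfl fun i _ => ?_
    rcases hX01 i ω with h | h
    · rw [h, mul_zero, Real.exp_zero]; ring
    · rw [h, mul_one, het]; ring
  have expand : ∀ ω, Real.exp (t * ∑ i, X i ω)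
      = ∑ S ∈ Finset.univ.powerset,
          (η ^ S.card * (1 - η) ^ (Finset.univ \ S).card) * ∏ i ∈ S, (1 - X i ω) := by
    intro ω
    rw [hexp_eq ω, Finset.prod_add]
    refine Finset.sum_congr rfl fun S _ => ?_
    rw [Finset.prod_mul_distrib, Finset.prod_const, Finset.prod_const]
    ring
  have hIntExp : Integrable (fun ω => Real.exp (t * ∑ i, X i ω)) μ := by
    have h : (fun ω => Real.exp (t * ∑ i, X i ω))
        = fun ω => ∑ S ∈ Finset.univ.powerset,
            (η ^ S.card * (1 - η) ^ (Finset.univ \ S).card) * ∏ i ∈ S, (1 - X i ω) :=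
      funext expand
    rw [h]
    exact integrable_finset_sum _ fun S _ => (hInt_prod S).const_mul _
  have hc : ∀ S : Finset (Fin n),
      (0:ℝ) ≤ η ^ S.card * (1 - η) ^ (Finset.univ \ S).card :=
    fun S => mul_nonneg (pow_nonneg hη0.le _) (pow_nonneg h1η.le _)
  have hstep : ∫ ω, Real.exp (t * ∑ i, X i ω) ∂μ ≤ ∏ i, (η * q i + (1 - η)) := by
    calc ∫ ω, Real.exp (t * ∑ i, X i ω) ∂μ
        = ∑ S ∈ Finset.univ.powerset,
            (η ^ S.card * (1 - η) ^ (Finset.univ \ S).card)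
              * (μ {ω | ∀ i ∈ S, X i ω = 0}).toReal := by
          simp_rw [expand]
          rw [integral_finset_sum _ (fun S _ => (hInt_prod S).const_mul _)]
          exact Finset.sum_congr rfl fun S _ => by rw [integral_const_mul, hint_prod S]
      _ ≤ ∑ S ∈ Finset.univ.powerset,
            (η ^ S.card * (1 - η) ^ (Finset.univ \ S).card) * ∏ i ∈ S, q i :=
          Finset.sum_le_sum fun S _ => mul_le_mul_of_nonneg_left (hneg S) (hc S)
      _ = ∏ i, (η * q i + (1 - η)) := by
          rw [Finset.prod_add]
          exact (Finset.sum_congr rfl fun S _ => by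
            rw [Finset.prod_mul_distrib, Finset.prod_const, Finset.prod_const]; ring).symm
  have hprod_le : ∏ i, (η * q i + (1 - η)) ≤ Real.exp (-η * m) := by
    calc ∏ i, (η * q i + (1 - η))
        ≤ ∏ i, Real.exp (-(η * (1 - q i))) := by
          refine Finset.prod_le_prod
            (fun i _ => add_nonneg (mul_nonneg hη0.le (hq0 i)) h1η.le) ?_
          intro i _
          have h := Real.add_one_le_exp (-(η * (1 - q i)))
          nlinarith
      _ = Real.exp (∑ i, -(η * (1 - q i))) := (Real.exp_sum _ _).symm
      _ = Real.exp (-η * m) := by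
          congr 1
          rw [hm_eq, Finset.mul_sum]
          exact Finset.sum_congr rfl fun i _ => by ring
  have hMarkov := ProbabilityTheory.measure_le_le_exp_mul_mgf (μ := μ)
    (X := fun ω => ∑ i, X i ω) ((1 - η) * m) ht0 hIntExp
  have hmgf : ProbabilityTheory.mgf (fun ω => ∑ i, X i ω) μ t ≤ Real.exp (-η * m) :=
    le_trans (le_of_eq rfl) (hstep.trans hprod_le)
  calc (μ {ω | ∑ i, X i ω ≤ (1 - η) * m}).toReal
      ≤ Real.exp (-t * ((1 - η) * m))
          * ProbabilityTheory.mgf (fun ω => ∑ i, X i ω) μ t := hMarkov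
    _ ≤ Real.exp (-t * ((1 - η) * m)) * Real.exp (-η * m) :=
        mul_le_mul_of_nonneg_left hmgf (Real.exp_nonneg _)
    _ = Real.exp (-t * ((1 - η) * m) + -η * m) := (Real.exp_add _ _).symm
    _ ≤ Real.exp (-η ^ 2 * m / 2) := by
        apply Real.exp_le_exp.mpr
        rw [ht]
        have hkey := key_log_ineq hη0 hη1
        nlinarith [mul_le_mul_of_nonneg_left hkey hm0]
end

section
/- A flawless partial colouring extends: if H* is a graph on the disjoint union of lists L(u) of size exactly ℓ (one list per vertex u of a graph G'), such that for every colour x the degree of x in H* is at most ℓ/8, and additionally the lists L(u) for distinct u span a partition and edges of H* join only colours in lists of distinct vertices, then choosing one colour uniformly and independently from each list yields, with positive probability, a system of representatives that is independent in H*; in particular such an independent transversal exists. -/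
open Finset

section Aux

variable {V C : Type*} [Fintype V] [Fintype C] [DecidableEq V] [DecidableEq C]

open Classical in
/-- The set of full colourings `σ` with `σ u ∈ L u` everywhere, that are `H`-independent
when restricted to a vertex set `S`. -/
noncomputable def trSet (H : SimpleGraph C) (L : V → Finset C) (S : Finset V) :
    Finset (V → C) :=
  Finset.univ.filter
    (fun σ => (∀ u, σ u ∈ L u) ∧ ∀ u ∈ S, ∀ v ∈ S, ¬ H.Adj (σ u) (σ v))

lemma mem_trSet {H : SimpleGraph C} {L : V → Finset C} {S : Finset V} {σ : V → C} :
    σ ∈ trSet H L S ↔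
      (∀ u, σ u ∈ L u) ∧ ∀ u ∈ S, ∀ v ∈ S, ¬ H.Adj (σ u) (σ v) := by
  classical
  simp [trSet]

lemma trSet_mono {H : SimpleGraph C} {L : V → Finset C} {S T : Finset V} (h : S ⊆ T) :
    trSet H L T ⊆ trSet H L S := by
  intro σ hσ
  rw [mem_trSet] at hσ ⊢
  exact ⟨hσ.1, fun u hu v hv => hσ.2 u (h hu) v (h hv)⟩

lemma trSet_update {H : SimpleGraph C} {L : V → Finset C} {S : Finset V} {σ : V → C}
    (hσ : σ ∈ trSet H L S) {v : V} (hv : v ∉ S) {y : C} (hy : y ∈ L v) :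
    Function.update σ v y ∈ trSet H L S := by
  rw [mem_trSet] at hσ ⊢
  constructor
  · intro w
    by_cases hw : w = v
    · subst hw; simpa using hy
    · rw [Function.update_of_ne hw]; exact hσ.1 w
  · intro a ha b hb
    have hav : a ≠ v := by rintro rfl; exact hv ha
    have hbv : b ≠ v := by rintro rfl; exact hv hb
    rw [Function.update_of_ne hav, Function.update_of_ne hbv]
    exact hσ.2 a ha b hb

/-- Fiber counting: if a set of functions is closed under updating coordinate `v`
within `L v`, all fibers over `L v` have the same size. -/
lemma card_eq_mul_fiber (L : V → Finset C) (A : Finset (V → C)) (v : V)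
    (hmem : ∀ σ ∈ A, σ v ∈ L v)
    (hupd : ∀ σ ∈ A, ∀ y ∈ L v, Function.update σ v y ∈ A)
    {y : C} (hy : y ∈ L v) :
    A.card = (L v).card * (A.filter (fun σ => σ v = y)).card := by
  classical
  rw [Finset.card_eq_sum_card_fiberwise hmem]
  have hfib : ∀ y' ∈ L v,
      (A.filter (fun σ => σ v = y')).card = (A.filter (fun σ => σ v = y)).card := by
    intro y' hy'
    apply Finset.card_bij (fun σ _ => Function.update σ v y)
    · intro σ hσ
      rw [mem_filter] at hσ ⊢
      exact ⟨hupd σ hσ.1 y hy, Function.update_self _ _ _⟩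
    · intro σ hσ τ hτ h
      rw [mem_filter] at hσ hτ
      funext w
      by_cases hw : w = v
      · subst hw; rw [hσ.2, hτ.2]
      · have := congrFun h w
        rwa [Function.update_of_ne hw, Function.update_of_ne hw] at this
    · intro τ hτ
      rw [mem_filter] at hτ
      refine ⟨Function.update τ v y', mem_filter.mpr
        ⟨hupd τ hτ.1 y' hy', Function.update_self _ _ _⟩, ?_⟩
      rw [Function.update_idem, ← hτ.2, Function.update_eq_self]
  rw [Finset.sum_congr rfl hfib, Finset.sum_const, smul_eq_mul]

lemma trSet_card_le {ℓ : ℕ} (H : SimpleGraph C) [DecidableRel H.Adj] (L : V → Finset C)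
    (hℓ : 1 ≤ ℓ) (hcard : ∀ u, (L u).card = ℓ)
    (hdisj : ∀ u v : V, u ≠ v → Disjoint (L u) (L v))
    (hdeg : ∀ x : C, 8 * H.degree x ≤ ℓ) :
    ∀ (n : ℕ) (S : Finset V), S.card = n → ∀ u ∉ S,
      (trSet H L S).card ≤ 2 * (trSet H L (insert u S)).card := by
  classical
  intro n
  induction n using Nat.strong_induction_on with
  | _ n IH =>
  intro S hS u hu
  set N := (trSet H L S).card with hN
  set Bad := (trSet H L S).filter (fun σ => ∃ v ∈ S, H.Adj (σ u) (σ v)) with hBadDef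
  -- split into good and bad
  have hsplit : (trSet H L (insert u S)).card + Bad.card = N := by
    have h1 : trSet H L (insert u S)
        = (trSet H L S).filter (fun σ => ¬ ∃ v ∈ S, H.Adj (σ u) (σ v)) := by
      ext σ
      rw [mem_filter, mem_trSet, mem_trSet]
      constructor
      · rintro ⟨h1, h2⟩
        refine ⟨⟨h1, fun a ha b hb => h2 a (mem_insert_of_mem ha) b (mem_insert_of_mem hb)⟩, ?_⟩
        rintro ⟨v, hv, hadj⟩
        exact h2 u (mem_insert_self _ _) v (mem_insert_of_mem hv) hadj
      · rintro ⟨⟨h1, h2⟩, h3⟩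
        refine ⟨h1, ?_⟩
        intro a ha b hb
        rcases mem_insert.mp ha with rfl | ha' <;> rcases mem_insert.mp hb with rfl | hb'
        · exact H.irrefl
        · exact fun h => h3 ⟨b, hb', h⟩
        · exact fun h => h3 ⟨a, ha', h.symm⟩
        · exact h2 a ha' b hb'
    have h2 := Finset.card_filter_add_card_filter_not
      (s := trSet H L S) (p := fun σ => ∃ v ∈ S, H.Adj (σ u) (σ v))
    rw [h1, Nat.add_comm]
    exact h2
  -- bound on each elementary bad event
  have key : ∀ x ∈ L u, ∀ y ∈ H.neighborFinset x,
      ℓ * (ℓ * ((trSet H L S).filter (fun σ => σ u = x ∧ ∃ v ∈ S, σ v = y)).card)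
        ≤ 2 * N := by
    intro x hx y hy
    by_cases hv : ∃ v ∈ S, y ∈ L v
    · obtain ⟨v, hvS, hyv⟩ := hv
      have huv : u ≠ v := fun h => hu (h ▸ hvS)
      have hvE : v ∉ S.erase v := notMem_erase _ _
      have huE : u ∉ S.erase v := fun h => hu (mem_of_mem_erase h)
      -- inclusion into a double fiber over S.erase v
      have hsub : (trSet H L S).filter (fun σ => σ u = x ∧ ∃ v' ∈ S, σ v' = y)
          ⊆ (trSet H L (S.erase v)).filter (fun σ => σ u = x ∧ σ v = y) := by
        intro σ hσ
        rw [mem_filter] at hσ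
        obtain ⟨hσS, hσu, v', hv'S, hσv'⟩ := hσ
        have hyv' : y ∈ L v' := hσv' ▸ (mem_trSet.mp hσS).1 v'
        have hveq : v' = v := by
          by_contra hne
          exact Finset.disjoint_left.mp (hdisj v' v hne) hyv' hyv
        subst hveq
        exact mem_filter.mpr ⟨trSet_mono (erase_subset _ _) hσS, hσu, hσv'⟩
      -- exact double-fiber count
      have hcount : (trSet H L (S.erase v)).card
          = ℓ * (ℓ * ((trSet H L (S.erase v)).filter
              (fun σ => σ u = x ∧ σ v = y)).card) := by
        have step1 : (trSet H L (S.erase v)).card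
            = (L u).card * ((trSet H L (S.erase v)).filter (fun σ => σ u = x)).card :=
          card_eq_mul_fiber L _ u (fun σ hσ => (mem_trSet.mp hσ).1 u)
            (fun σ hσ z hz => trSet_update hσ huE hz) hx
        have step2 : ((trSet H L (S.erase v)).filter (fun σ => σ u = x)).card
            = (L v).card * (((trSet H L (S.erase v)).filter (fun σ => σ u = x)).filter
                (fun σ => σ v = y)).card := by
          refine card_eq_mul_fiber L _ v ?_ ?_ hyv
          · intro σ hσ
            exact (mem_trSet.mp (mem_filter.mp hσ).1).1 v
          · intro σ hσ z hz
            rw [mem_filter] at hσ ⊢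
            refine ⟨trSet_update hσ.1 hvE hz, ?_⟩
            rw [Function.update_of_ne huv]
            exact hσ.2
        rw [step1, step2, Finset.filter_filter, hcard u, hcard v]
      -- induction hypothesis on S.erase v
      have hIH : (trSet H L (S.erase v)).card ≤ 2 * N := by
        have hlt : (S.erase v).card < n := by
          rw [card_erase_of_mem hvS, hS]
          have : 1 ≤ n := by
            rw [← hS]
            exact Finset.card_pos.mpr ⟨v, hvS⟩
          exact Nat.sub_lt_self one_pos this
        have := IH (S.erase v).card hlt (S.erase v) rfl v (notMem_erase _ _)
        rwa [insert_erase hvS] at this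
      calc ℓ * (ℓ * ((trSet H L S).filter (fun σ => σ u = x ∧ ∃ v' ∈ S, σ v' = y)).card)
          ≤ ℓ * (ℓ * ((trSet H L (S.erase v)).filter (fun σ => σ u = x ∧ σ v = y)).card) := by
            exact Nat.mul_le_mul_left _ (Nat.mul_le_mul_left _ (card_le_card hsub))
        _ = (trSet H L (S.erase v)).card := hcount.symm
        _ ≤ 2 * N := hIH
    · have hempty : (trSet H L S).filter (fun σ => σ u = x ∧ ∃ v' ∈ S, σ v' = y) = ∅ := by
        rw [Finset.filter_eq_empty_iff]
        rintro σ hσ ⟨_, v', hv'S, hσv'⟩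
        exact hv ⟨v', hv'S, hσv' ▸ (mem_trSet.mp hσ).1 v'⟩
      rw [hempty]
      simp
  -- cover Bad by elementary bad events
  have hBadsub : Bad ⊆ (L u).biUnion (fun x => (H.neighborFinset x).biUnion
      (fun y => (trSet H L S).filter (fun σ => σ u = x ∧ ∃ v ∈ S, σ v = y))) := by
    intro σ hσ
    rw [hBadDef, mem_filter] at hσ
    obtain ⟨hσS, v, hvS, hadj⟩ := hσ
    refine mem_biUnion.mpr ⟨σ u, (mem_trSet.mp hσS).1 u, mem_biUnion.mpr
      ⟨σ v, ?_, mem_filter.mpr ⟨hσS, rfl, v, hvS, rfl⟩⟩⟩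
    rwa [SimpleGraph.mem_neighborFinset]
  have hBadcard : Bad.card ≤ ∑ x ∈ L u, ∑ y ∈ H.neighborFinset x,
      ((trSet H L S).filter (fun σ => σ u = x ∧ ∃ v ∈ S, σ v = y)).card := by
    refine (card_le_card hBadsub).trans (card_biUnion_le.trans ?_)
    exact Finset.sum_le_sum fun x _ => card_biUnion_le
  -- arithmetic
  have h4 : ℓ * (ℓ * Bad.card) ≤ ∑ x ∈ L u, H.degree x * (2 * N) := by
    calc ℓ * (ℓ * Bad.card)
        ≤ ℓ * (ℓ * ∑ x ∈ L u, ∑ y ∈ H.neighborFinset x,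
            ((trSet H L S).filter (fun σ => σ u = x ∧ ∃ v ∈ S, σ v = y)).card) :=
          Nat.mul_le_mul_left _ (Nat.mul_le_mul_left _ hBadcard)
      _ = ∑ x ∈ L u, ∑ y ∈ H.neighborFinset x,
            ℓ * (ℓ * ((trSet H L S).filter (fun σ => σ u = x ∧ ∃ v ∈ S, σ v = y)).card) := by
          simp only [Finset.mul_sum]
      _ ≤ ∑ x ∈ L u, ∑ y ∈ H.neighborFinset x, 2 * N :=
          Finset.sum_le_sum fun x hx => Finset.sum_le_sum fun y hy => key x hx y hy
      _ = ∑ x ∈ L u, H.degree x * (2 * N) := by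
          simp [Finset.sum_const, SimpleGraph.card_neighborFinset_eq_degree, smul_eq_mul]
  have h5 : 8 * (ℓ * (ℓ * Bad.card)) ≤ ℓ * ℓ * (2 * N) := by
    calc 8 * (ℓ * (ℓ * Bad.card)) ≤ 8 * ∑ x ∈ L u, H.degree x * (2 * N) :=
          Nat.mul_le_mul_left _ h4
      _ = ∑ x ∈ L u, (8 * H.degree x) * (2 * N) := by
          rw [Finset.mul_sum]; exact Finset.sum_congr rfl fun x _ => by ring
      _ ≤ ∑ x ∈ L u, ℓ * (2 * N) :=
          Finset.sum_le_sum fun x _ => Nat.mul_le_mul_right _ (hdeg x)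
      _ = ℓ * ℓ * (2 * N) := by
          rw [Finset.sum_const, hcard u, smul_eq_mul]; ring
  have h6 : 8 * Bad.card ≤ 2 * N := by
    have h7 : ℓ * ℓ * (8 * Bad.card) ≤ ℓ * ℓ * (2 * N) := by
      calc ℓ * ℓ * (8 * Bad.card) = 8 * (ℓ * (ℓ * Bad.card)) := by ring
        _ ≤ ℓ * ℓ * (2 * N) := h5
    exact Nat.le_of_mul_le_mul_left h7 (by positivity)
  clear h4 h5 key hBadcard hBadsub hBadDef hN
  clear_value N Bad
  omega

lemma trSet_card_pos {ℓ : ℕ} (H : SimpleGraph C) [DecidableRel H.Adj] (L : V → Finset C)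
    (hℓ : 1 ≤ ℓ) (hcard : ∀ u, (L u).card = ℓ)
    (hdisj : ∀ u v : V, u ≠ v → Disjoint (L u) (L v))
    (hdeg : ∀ x : C, 8 * H.degree x ≤ ℓ) :
    ∀ S : Finset V, 0 < (trSet H L S).card := by
  intro S
  induction S using Finset.induction_on with
  | empty =>
    rw [Finset.card_pos]
    have hne : ∀ u : V, (L u).Nonempty := fun u =>
      Finset.card_pos.mp (by rw [hcard u]; exact hℓ)
    refine ⟨fun u => (hne u).choose, ?_⟩
    rw [mem_trSet]
    exact ⟨fun u => (hne u).choose_spec, by simp⟩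
  | @insert a s ha IH =>
    have := trSet_card_le H L hℓ hcard hdisj hdeg s.card s rfl a ha
    omega

end Aux

/-- Independent transversal: if the colours are partitioned into pairwise disjoint lists
`L(u)` of size exactly `ℓ ≥ 1`, the graph `H*` has no edges inside any list, and every
colour has degree at most `ℓ/8` in `H*`, then one can pick one colour from each list so
that the chosen colours form an independent set in `H*`. -/
theorem stmt17 {V C : Type*} [Fintype V] [Fintype C]
    (H : SimpleGraph C) [DecidableRel H.Adj] (ℓ : ℕ) (hℓ : 1 ≤ ℓ)
    (L : V → Finset C)
    (hcard : ∀ u, (L u).card = ℓ)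
    (hdisj : ∀ u v : V, u ≠ v → Disjoint (L u) (L v))
    (hcover : ∀ c : C, ∃ u, c ∈ L u)
    (hinside : ∀ u, ∀ x ∈ L u, ∀ y ∈ L u, ¬ H.Adj x y)
    (hdeg : ∀ x : C, (H.degree x : ℝ) ≤ (ℓ : ℝ) / 8) :
    ∃ σ : V → C, (∀ u, σ u ∈ L u) ∧ ∀ u v : V, ¬ H.Adj (σ u) (σ v) := by
  classical
  have hdeg8 : ∀ x : C, 8 * H.degree x ≤ ℓ := by
    intro x
    have h := hdeg x
    have h2 : (8 * H.degree x : ℝ) ≤ (ℓ : ℝ) := by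
      push_cast
      linarith
    exact_mod_cast h2
  obtain ⟨σ, hσ⟩ := Finset.card_pos.mp
    (trSet_card_pos H L hℓ hcard hdisj hdeg8 Finset.univ)
  rw [mem_trSet] at hσ
  exact ⟨σ, hσ.1, fun u v => hσ.2 u (Finset.mem_univ u) v (Finset.mem_univ v)⟩
end
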